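/- arXiv:2106.04504 — 10 statements merged into one kernel-verified Lean document; each statement's English description precedes it below -/
import Mathlib

section
/- Let n ≥ 5 and 2 ≤ k < n/2 be integers, and let ξ : ℝ → ℝ be a C² function. Define F_k[ξ](t) = 2^{1-k}·C(n-1,k-1)·e^{2kξ(t)}(1-ξ'(t)²)^{k-1}(ξ''(t) + ((n-2k)/(2k))(1-ξ'(t)²)) and H̄(x,y) = 2^{-k}·C(n,k)·e^{(2k-n)x}(1-y²)^k - e^{-nx}. Then for all t, (d/dt) H̄(ξ(t), ξ'(t)) = -n·(F_k[ξ](t) - 1)·e^{-nξ(t)}·ξ'(t). -/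
/-!
Differentiating `H̄(ξ, ξ')` by the chain rule, the first term of `H̄` contributes
`-c ξ' e^{(2k-n)ξ} (1 - ξ'²)^{k-1} (2k ξ'' + (n - 2k)(1 - ξ'²))` with `c = 2^{-k} C(n,k)`,
and by `n C(n-1,k-1) = k C(n,k)` this is exactly `-n F_k[ξ] e^{-nξ} ξ'`;
the second term contributes `n e^{-nξ} ξ'`.
-/

open Real

theorem Nat.mul_choose_sub_one (n : ℕ) {k : ℕ} (hk : 1 ≤ k) :
    n * (n - 1).choose (k - 1) = n.choose k * k := by
  obtain ⟨k, rfl⟩ := Nat.exists_eq_add_of_le' hk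
  cases n with
  | zero => simp
  | succ n => simpa using Nat.add_one_mul_choose_eq n k

theorem mul_two_rpow_one_sub_mul_choose (n : ℕ) {k : ℕ} (hk : 1 ≤ k) :
    (n : ℝ) * ((2 : ℝ) ^ ((1 : ℝ) - k) * (n - 1).choose (k - 1)) =
      2 * k * ((2 : ℝ) ^ (-(k : ℝ)) * n.choose k) := by
  have hchoose : (n : ℝ) * (n - 1).choose (k - 1) = n.choose k * k := by
    exact_mod_cast Nat.mul_choose_sub_one n hk
  rw [sub_eq_add_neg, rpow_add two_pos, rpow_one]
  linear_combination (2 * (2 : ℝ) ^ (-(k : ℝ))) * hchoose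

theorem hasDerivAt_exp_mul_mul_one_sub_sq_pow {f g : ℝ → ℝ} {v w t : ℝ}
    (hf : HasDerivAt f v t) (hg : HasDerivAt g w t) (a : ℝ) {k : ℕ} (hk : 1 ≤ k) :
    HasDerivAt (fun s => exp (a * f s) * (1 - g s ^ 2) ^ k)
      (-exp (a * f t) * (1 - g t ^ 2) ^ (k - 1) *
        (2 * (k : ℝ) * g t * w - a * v * (1 - g t ^ 2))) t := by
  refine ((hf.const_mul a).exp.fun_mul (((hg.fun_pow 2).const_sub 1).fun_pow k)).congr_deriv ?_
  obtain ⟨k, rfl⟩ := Nat.exists_eq_add_of_le' hk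
  push_cast

  ring

theorem stmt_3_general (n k : ℕ) (hk : 2 ≤ k)
    (ξ : ℝ → ℝ) (hξ : ContDiff ℝ 2 ξ)
    (Fk : ℝ → ℝ)
    (hFk : ∀ t, Fk t = (2:ℝ) ^ ((1:ℝ) - (k:ℝ)) * ((n - 1).choose (k - 1) : ℝ) *
        Real.exp (2 * (k:ℝ) * ξ t) * (1 - (deriv ξ t) ^ 2) ^ (k - 1) *
        (deriv (deriv ξ) t + (((n:ℝ) - 2 * (k:ℝ)) / (2 * (k:ℝ))) * (1 - (deriv ξ t) ^ 2)))
    (Hbar : ℝ → ℝ → ℝ)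
    (hHbar : ∀ x y, Hbar x y = (2:ℝ) ^ (-(k:ℝ)) * (n.choose k : ℝ) *
        Real.exp ((2 * (k:ℝ) - (n:ℝ)) * x) * (1 - y ^ 2) ^ k - Real.exp (-(n:ℝ) * x)) :
    ∀ t : ℝ, HasDerivAt (fun s => Hbar (ξ s) (deriv ξ s))
      (-(n:ℝ) * (Fk t - 1) * Real.exp (-(n:ℝ) * ξ t) * deriv ξ t) t := by
  intro t
  have hk1 : 1 ≤ k := by omega
  set c : ℝ := (2:ℝ) ^ (-(k:ℝ)) * n.choose k
  set v := deriv ξ t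
  set w := deriv (deriv ξ) t
  have hv : HasDerivAt ξ v t := (hξ.differentiable two_ne_zero t).hasDerivAt
  have hw : HasDerivAt (deriv ξ) w t := (hξ.differentiable_deriv_two t).hasDerivAt
  have hFk' : n * Fk t = c * exp (2 * k * ξ t) * (1 - v ^ 2) ^ (k - 1) *
      (2 * k * w + (n - 2 * k) * (1 - v ^ 2)) := by
    have hk0 : (k : ℝ) ≠ 0 := by positivity
    calc n * Fk t = 2 * k * c * exp (2 * k * ξ t) * (1 - v ^ 2) ^ (k - 1) *
          (w + (n - 2 * k) / (2 * k) * (1 - v ^ 2)) := by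
          rw [hFk]
          linear_combination (exp (2 * k * ξ t) * (1 - v ^ 2) ^ (k - 1) *
            (w + (n - 2 * k) / (2 * k) * (1 - v ^ 2))) * mul_two_rpow_one_sub_mul_choose n hk1
      _ = _ := by field_simp
  have hHbar' : (fun s => Hbar (ξ s) (deriv ξ s)) = fun s =>
      c * (exp ((2 * k - n) * ξ s) * (1 - deriv ξ s ^ 2) ^ k) - exp (-n * ξ s) :=
    funext fun s => by rw [hHbar, mul_assoc c]
  rw [hHbar']
  refine (((hasDerivAt_exp_mul_mul_one_sub_sq_pow hv hw (2 * k - n) hk1).const_mul c).fun_sub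
    (hv.const_mul (-(n : ℝ))).exp).congr_deriv ?_
  have hexp : exp ((2 * k - n) * ξ t) = exp (2 * k * ξ t) * exp (-n * ξ t) := by
    rw [← exp_add]; ring_nf
  rw [hexp]
  linear_combination exp (-n * ξ t) * v * hFk'

theorem stmt_3 (n k : ℕ) (hn : 5 ≤ n) (hk : 2 ≤ k) (hkn : 2 * k < n)
    (ξ : ℝ → ℝ) (hξ : ContDiff ℝ 2 ξ)
    (Fk : ℝ → ℝ)
    (hFk : ∀ t, Fk t = (2:ℝ) ^ ((1:ℝ) - (k:ℝ)) * ((n - 1).choose (k - 1) : ℝ) *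
        Real.exp (2 * (k:ℝ) * ξ t) * (1 - (deriv ξ t) ^ 2) ^ (k - 1) *
        (deriv (deriv ξ) t + (((n:ℝ) - 2 * (k:ℝ)) / (2 * (k:ℝ))) * (1 - (deriv ξ t) ^ 2)))
    (Hbar : ℝ → ℝ → ℝ)
    (hHbar : ∀ x y, Hbar x y = (2:ℝ) ^ (-(k:ℝ)) * (n.choose k : ℝ) *
        Real.exp ((2 * (k:ℝ) - (n:ℝ)) * x) * (1 - y ^ 2) ^ k - Real.exp (-(n:ℝ) * x)) :
    ∀ t : ℝ, HasDerivAt (fun s => Hbar (ξ s) (deriv ξ s))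
      (-(n:ℝ) * (Fk t - 1) * Real.exp (-(n:ℝ) * ξ t) * deriv ξ t) t :=
  stmt_3_general n k hk ξ hξ Fk hFk Hbar hHbar
end

section
/- Let n ≥ 5 and 2 ≤ k < n/2 be integers, let K : ℝ → ℝ be C¹, and let ξ : ℝ → ℝ be C². Define F_k[ξ] as before and H(t,x,y) = 2^{-k}·C(n,k)·e^{(2k-n)x}(1-y²)^k - K(t)·e^{-nx}. Then for all t₁ ≤ t₂, H(t₂,ξ(t₂),ξ'(t₂)) - H(t₁,ξ(t₁),ξ'(t₁)) = ∫_{t₁}^{t₂} [ -n·(F_k[ξ](τ) - K(τ))·e^{-nξ(τ)}·ξ'(τ) - K'(τ)·e^{-nξ(τ)} ] dτ. -/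
/-!
Along a trajectory `ξ`, the derivative of `H(t, ξ, ξ')` is computed directly: the chain rule
produces `e^{(2k-n)ξ}(1-ξ'²)^{k-1} ξ' ((2k-n)(1-ξ'²) - 2kξ'')` from the first term of `H`, which by
`k·C(n,k) = n·C(n-1,k-1)` is `-n F_k[ξ] e^{-nξ} ξ'`; the term `K e^{-nξ}` contributes the rest.
The identity is then the fundamental theorem of calculus.
-/

open Real intervalIntegral

theorem Nat.cast_mul_choose_eq {R : Type*} [Semiring R] {n k : ℕ} (hk : 1 ≤ k) :
    (k : R) * n.choose k = n * (n - 1).choose (k - 1) := by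
  obtain ⟨k, rfl⟩ := Nat.exists_eq_add_of_le' hk
  rcases n with _ | n
  · simp
  · simp only [Nat.add_sub_cancel]
    rw [← Nat.cast_mul, ← Nat.cast_mul, Nat.mul_comm, Nat.add_one_mul_choose_eq]

namespace SigmaKYamabe

/-- `F_k[ξ](t)` as a function of the 2-jet `(ξ t, ξ' t, ξ'' t) = (x, y, z)`. -/
noncomputable def sigmaK (n k : ℕ) (x y z : ℝ) : ℝ :=
  (2 : ℝ) ^ ((1 : ℝ) - k) * ((n - 1).choose (k - 1) : ℝ) * exp (2 * k * x) *
    (1 - y ^ 2) ^ (k - 1) * (z + ((n - 2 * k) / (2 * k)) * (1 - y ^ 2))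

noncomputable def pohozaevH (n k : ℕ) (K : ℝ → ℝ) (t x y : ℝ) : ℝ :=
  (2 : ℝ) ^ (-(k : ℝ)) * (n.choose k : ℝ) * exp ((2 * k - n) * x) * (1 - y ^ 2) ^ k -
    K t * exp (-n * x)

theorem sigmaK_continuous (n k : ℕ) {f g h : ℝ → ℝ} (hf : Continuous f) (hg : Continuous g)
    (hh : Continuous h) : Continuous fun t => sigmaK n k (f t) (g t) (h t) := by
  unfold sigmaK
  fun_prop

theorem hasDerivAt_kinetic {n k : ℕ} (hk : 1 ≤ k) {ξ η : ℝ → ℝ} {z t : ℝ}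
    (hξ : HasDerivAt ξ (η t) t) (hη : HasDerivAt η z t) :
    HasDerivAt (fun s => (2 : ℝ) ^ (-(k : ℝ)) * (n.choose k : ℝ) *
        exp ((2 * k - n) * ξ s) * (1 - η s ^ 2) ^ k)
      (-n * sigmaK n k (ξ t) (η t) z * exp (-n * ξ t) * η t) t := by
  have hderiv := ((((hξ.const_mul ((2 : ℝ) * k - n)).exp).const_mul
    ((2 : ℝ) ^ (-(k : ℝ)) * n.choose k)).fun_mul (((hη.fun_pow 2).const_sub 1).fun_pow k))
  refine hderiv.congr_deriv ?_
  have hexp : exp ((2 * k - n) * ξ t) = exp (2 * k * ξ t) * exp (-n * ξ t) := by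
    rw [← exp_add]; ring_nf
  have hpow : (1 - η t ^ 2) ^ k = (1 - η t ^ 2) ^ (k - 1) * (1 - η t ^ 2) := by
    rw [← pow_succ, Nat.sub_add_cancel hk]
  have htwo : (2 : ℝ) ^ ((1 : ℝ) - k) = 2 * 2 ^ (-(k : ℝ)) := by
    rw [sub_eq_add_neg, rpow_add two_pos, rpow_one]
  have hk0 : (k : ℝ) ≠ 0 := by positivity
  have hchoose : (n.choose k : ℝ) = n * (n - 1).choose (k - 1) / k := by
    rw [eq_div_iff hk0, mul_comm, Nat.cast_mul_choose_eq hk]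
  simp only [sigmaK, hexp, hpow, htwo, hchoose]
  field_simp
  ring

theorem hasDerivAt_pohozaevH {n k : ℕ} (hk : 1 ≤ k) {K ξ η : ℝ → ℝ} {K' z t : ℝ}
    (hK : HasDerivAt K K' t) (hξ : HasDerivAt ξ (η t) t) (hη : HasDerivAt η z t) :
    HasDerivAt (fun s => pohozaevH n k K s (ξ s) (η s))
      (-n * (sigmaK n k (ξ t) (η t) z - K t) * exp (-n * ξ t) * η t -
        K' * exp (-n * ξ t)) t := by
  have hpot := hK.mul (hξ.const_mul (-(n : ℝ))).exp
  refine ((hasDerivAt_kinetic hk hξ hη).sub hpot).congr_deriv ?_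
  ring

end SigmaKYamabe

open SigmaKYamabe in
theorem stmt_4_general (n k : ℕ) (hk : 2 ≤ k)
    (K : ℝ → ℝ) (hK : ContDiff ℝ 1 K)
    (ξ : ℝ → ℝ) (hξ : ContDiff ℝ 2 ξ)
    (Fk : ℝ → ℝ)
    (hFk : ∀ t, Fk t = (2:ℝ) ^ ((1:ℝ) - (k:ℝ)) * ((n - 1).choose (k - 1) : ℝ) *
        Real.exp (2 * (k:ℝ) * ξ t) * (1 - (deriv ξ t) ^ 2) ^ (k - 1) *
        (deriv (deriv ξ) t + (((n:ℝ) - 2 * (k:ℝ)) / (2 * (k:ℝ))) * (1 - (deriv ξ t) ^ 2)))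
    (H : ℝ → ℝ → ℝ → ℝ)
    (hH : ∀ t x y, H t x y = (2:ℝ) ^ (-(k:ℝ)) * (n.choose k : ℝ) *
        Real.exp ((2 * (k:ℝ) - (n:ℝ)) * x) * (1 - y ^ 2) ^ k - K t * Real.exp (-(n:ℝ) * x)) :
    ∀ t₁ t₂ : ℝ, t₁ ≤ t₂ →
      H t₂ (ξ t₂) (deriv ξ t₂) - H t₁ (ξ t₁) (deriv ξ t₁) =
        ∫ τ in t₁..t₂, (-(n:ℝ) * (Fk τ - K τ) * Real.exp (-(n:ℝ) * ξ τ) * deriv ξ τ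
          - deriv K τ * Real.exp (-(n:ℝ) * ξ τ)) := by
  intro t₁ t₂ _
  obtain rfl : H = pohozaevH n k K := funext₃ hH
  obtain rfl : Fk = fun t => sigmaK n k (ξ t) (deriv ξ t) (deriv (deriv ξ) t) := funext hFk
  have hξ' : ContDiff ℝ 1 (deriv ξ) := (contDiff_succ_iff_deriv.mp hξ).2.2
  have hderiv : ∀ t ∈ Set.uIcc t₁ t₂, HasDerivAt (fun s => pohozaevH n k K s (ξ s) (deriv ξ s))
      (-n * (sigmaK n k (ξ t) (deriv ξ t) (deriv (deriv ξ) t) - K t) * exp (-n * ξ t) *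
        deriv ξ t - deriv K t * exp (-n * ξ t)) t := fun t _ =>
    hasDerivAt_pohozaevH (by omega) (hK.differentiable one_ne_zero t).hasDerivAt
      (hξ.differentiable (by norm_num) t).hasDerivAt
      (hξ'.differentiable one_ne_zero t).hasDerivAt
  have hσc := sigmaK_continuous n k hξ.continuous hξ'.continuous (hξ'.continuous_deriv le_rfl)
  have hK'c := hK.continuous_deriv le_rfl
  have hξc := hξ.continuous
  have hξ'c := hξ'.continuous
  have hKc := hK.continuous
  refine (integral_eq_sub_of_hasDerivAt hderiv (Continuous.intervalIntegrable ?_ _ _)).symm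
  fun_prop

theorem stmt_4 (n k : ℕ) (hn : 5 ≤ n) (hk : 2 ≤ k) (hkn : 2 * k < n)
    (K : ℝ → ℝ) (hK : ContDiff ℝ 1 K)
    (ξ : ℝ → ℝ) (hξ : ContDiff ℝ 2 ξ)
    (Fk : ℝ → ℝ)
    (hFk : ∀ t, Fk t = (2:ℝ) ^ ((1:ℝ) - (k:ℝ)) * ((n - 1).choose (k - 1) : ℝ) *
        Real.exp (2 * (k:ℝ) * ξ t) * (1 - (deriv ξ t) ^ 2) ^ (k - 1) *
        (deriv (deriv ξ) t + (((n:ℝ) - 2 * (k:ℝ)) / (2 * (k:ℝ))) * (1 - (deriv ξ t) ^ 2)))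
    (H : ℝ → ℝ → ℝ → ℝ)
    (hH : ∀ t x y, H t x y = (2:ℝ) ^ (-(k:ℝ)) * (n.choose k : ℝ) *
        Real.exp ((2 * (k:ℝ) - (n:ℝ)) * x) * (1 - y ^ 2) ^ k - K t * Real.exp (-(n:ℝ) * x)) :
    ∀ t₁ t₂ : ℝ, t₁ ≤ t₂ →
      H t₂ (ξ t₂) (deriv ξ t₂) - H t₁ (ξ t₁) (deriv ξ t₁) =
        ∫ τ in t₁..t₂, (-(n:ℝ) * (Fk τ - K τ) * Real.exp (-(n:ℝ) * ξ τ) * deriv ξ τ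
          - deriv K τ * Real.exp (-(n:ℝ) * ξ τ)) :=
  stmt_4_general n k hk K hK ξ hξ Fk hFk H hH
end

section
/- Let n ≥ 5 and 2 ≤ k < n/2 be integers and ξ : ℝ → ℝ a C² function with |ξ'(t)| < 1 for all t. Define m(t) = (2^{1-k}/n)·C(n,k)·(1+ξ'(t))^k·e^{((n-2k)/2)(t - ξ(t))}. Then for all t₁ ≤ t₂, m(t₂) - m(t₁) = ∫_{t₁}^{t₂} F_k[ξ](τ)·(1-ξ'(τ))^{-(k-1)}·e^{-((n+2k)/2)ξ(τ)}·e^{((n-2k)/2)τ} dτ, where F_k[ξ](t) = 2^{1-k}·C(n-1,k-1)·e^{2kξ(t)}(1-ξ'(t)²)^{k-1}(ξ''(t) + ((n-2k)/(2k))(1-ξ'(t)²)). -/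
open Real intervalIntegral

/-!
The integrand is the exact derivative of `m`. Differentiating `(1 + ξ')^k e^{a(t - ξ)}` with
`a = (n - 2k)/2` gives `k (1 + ξ')^{k-1} e^{a(t - ξ)} (ξ'' + (a/k)(1 - ξ'^2))`; on the other side
`(1 - ξ'^2)^{k-1} (1 - ξ')^{-(k-1)} = (1 + ξ')^{k-1}`, the three exponentials combine into
`e^{a(t - ξ)}`, and `k C(n,k) = n C(n-1,k-1)` matches the constants. The fundamental theorem of
calculus concludes.
-/

theorem Nat.mul_choose_eq_mul_choose_sub_one {n k : ℕ} (hk : k ≠ 0) :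
    k * n.choose k = n * (n - 1).choose (k - 1) := by
  obtain ⟨k, rfl⟩ := Nat.exists_eq_succ_of_ne_zero hk
  cases n with
  | zero => simp
  | succ n => simpa [mul_comm] using (Nat.add_one_mul_choose_eq n k).symm

-- `rpow` agrees with `zpow` at integer exponents, also for a negative base.
theorem one_sub_sq_pow_mul_rpow_neg {u : ℝ} (hu : u ≠ 1) (j : ℕ) :
    (1 - u ^ 2) ^ j * (1 - u) ^ (-(j : ℝ)) = (1 + u) ^ j := by
  have hu' : (1 - u) ^ j ≠ 0 := pow_ne_zero _ (sub_ne_zero.mpr hu.symm)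
  rw [rpow_neg_natCast, zpow_neg, zpow_natCast, show 1 - u ^ 2 = (1 - u) * (1 + u) by ring,
    mul_pow]
  field_simp

theorem HasDerivAt.one_add_pow_mul_exp {ξ v : ℝ → ℝ} {w t : ℝ} (a : ℝ) {k : ℕ} (hk : k ≠ 0)
    (hξ : HasDerivAt ξ (v t) t) (hv : HasDerivAt v w t) :
    HasDerivAt (fun s => (1 + v s) ^ k * Real.exp (a * (s - ξ s)))
      ((1 + v t) ^ (k - 1) * Real.exp (a * (t - ξ t)) * ((k : ℝ) * w + a * (1 - v t ^ 2))) t := by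
  have hpow := (hv.const_add 1).fun_pow k
  have hexp := (((hasDerivAt_id' t).fun_sub hξ).const_mul a).exp
  refine (hpow.fun_mul hexp).congr_deriv ?_
  obtain ⟨j, rfl⟩ := Nat.exists_eq_add_one_of_ne_zero hk
  rw [Nat.add_sub_cancel, pow_succ]
  push_cast
  ring

noncomputable def sigmaMass (n k : ℕ) (ξ : ℝ → ℝ) (t : ℝ) : ℝ :=
  ((2:ℝ) ^ ((1:ℝ) - (k:ℝ)) / (n:ℝ)) * (n.choose k : ℝ) *
    (1 + deriv ξ t) ^ k * Real.exp (((n:ℝ) - 2 * (k:ℝ)) / 2 * (t - ξ t))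

noncomputable def sigmaOperator (n k : ℕ) (ξ : ℝ → ℝ) (t : ℝ) : ℝ :=
  (2:ℝ) ^ ((1:ℝ) - (k:ℝ)) * ((n - 1).choose (k - 1) : ℝ) *
    Real.exp (2 * (k:ℝ) * ξ t) * (1 - (deriv ξ t) ^ 2) ^ (k - 1) *
    (deriv (deriv ξ) t + (((n:ℝ) - 2 * (k:ℝ)) / (2 * (k:ℝ))) * (1 - (deriv ξ t) ^ 2))

noncomputable def weightedSigmaOperator (n k : ℕ) (ξ : ℝ → ℝ) (t : ℝ) : ℝ :=
  sigmaOperator n k ξ t * (1 - deriv ξ t) ^ (-((k:ℝ) - 1)) *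
    Real.exp (-(((n:ℝ) + 2 * (k:ℝ)) / 2) * ξ t) * Real.exp (((n:ℝ) - 2 * (k:ℝ)) / 2 * t)

section

variable {n k : ℕ} {ξ : ℝ → ℝ}

theorem hasDerivAt_sigmaMass (hn : n ≠ 0) (hk : k ≠ 0) (hξ : ContDiff ℝ 2 ξ) {t : ℝ}
    (ht : deriv ξ t ≠ 1) : HasDerivAt (sigmaMass n k ξ) (weightedSigmaOperator n k ξ t) t := by
  have hξ₁ : ContDiff ℝ 1 (deriv ξ) := hξ.deriv' (n := 1)
  have H := (HasDerivAt.one_add_pow_mul_exp (((n:ℝ) - 2 * k) / 2) hk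
    ((hξ.differentiable (by norm_num)) t).hasDerivAt
    ((hξ₁.differentiable one_ne_zero) t).hasDerivAt).const_mul
    ((2:ℝ) ^ ((1:ℝ) - (k:ℝ)) / (n:ℝ) * (n.choose k : ℝ))
  have hchoose : (k : ℝ) * n.choose k = n * (n - 1).choose (k - 1) := by
    exact_mod_cast Nat.mul_choose_eq_mul_choose_sub_one hk
  have hexp : Real.exp (2 * (k:ℝ) * ξ t) * Real.exp (-(((n:ℝ) + 2 * (k:ℝ)) / 2) * ξ t) *
      Real.exp (((n:ℝ) - 2 * (k:ℝ)) / 2 * t) = Real.exp (((n:ℝ) - 2 * (k:ℝ)) / 2 * (t - ξ t)) := by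
    rw [← Real.exp_add, ← Real.exp_add]; ring_nf
  have hpow := one_sub_sq_pow_mul_rpow_neg ht (k - 1)
  rw [Nat.cast_sub (Nat.one_le_iff_ne_zero.mpr hk), Nat.cast_one] at hpow
  refine (H.congr_of_eventuallyEq (Filter.Eventually.of_forall fun s => ?_)).congr_deriv ?_
  · simp only [sigmaMass]; ring
  · have hn' : (n : ℝ) ≠ 0 := by exact_mod_cast hn
    have hk' : (k : ℝ) ≠ 0 := by exact_mod_cast hk
    calc _ = (2:ℝ) ^ ((1:ℝ) - k) * (k * n.choose k / n) *
          ((1 + deriv ξ t) ^ (k - 1) * Real.exp ((n - 2 * k) / 2 * (t - ξ t))) *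
          (deriv (deriv ξ) t + (n - 2 * k) / (2 * k) * (1 - deriv ξ t ^ 2)) := by
          field_simp
      _ = weightedSigmaOperator n k ξ t := by
          rw [hchoose, ← hexp, ← hpow, weightedSigmaOperator, sigmaOperator]
          field_simp

theorem continuous_weightedSigmaOperator (hξ : ContDiff ℝ 2 ξ) (h1 : ∀ t, deriv ξ t ≠ 1) :
    Continuous (weightedSigmaOperator n k ξ) := by
  have hd : Continuous (deriv ξ) := hξ.continuous_deriv (by norm_num)
  have hdd : Continuous (deriv (deriv ξ)) := (hξ.deriv' (n := 1)).continuous_deriv le_rfl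
  have hrpow : Continuous fun t => (1 - deriv ξ t) ^ (-((k:ℝ) - 1)) :=
    (continuous_const.sub hd).rpow_const fun t => Or.inl (sub_ne_zero.mpr (h1 t).symm)
  unfold weightedSigmaOperator sigmaOperator
  fun_prop

end

theorem stmt_5_general (n k : ℕ) (hn : 5 ≤ n) (hk : 2 ≤ k)
    (ξ : ℝ → ℝ) (hξ : ContDiff ℝ 2 ξ) (hξ' : ∀ t, |deriv ξ t| < 1)
    (Fk : ℝ → ℝ)
    (hFk : ∀ t, Fk t = (2:ℝ) ^ ((1:ℝ) - (k:ℝ)) * ((n - 1).choose (k - 1) : ℝ) *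
        Real.exp (2 * (k:ℝ) * ξ t) * (1 - (deriv ξ t) ^ 2) ^ (k - 1) *
        (deriv (deriv ξ) t + (((n:ℝ) - 2 * (k:ℝ)) / (2 * (k:ℝ))) * (1 - (deriv ξ t) ^ 2)))
    (m : ℝ → ℝ)
    (hm : ∀ t, m t = ((2:ℝ) ^ ((1:ℝ) - (k:ℝ)) / (n:ℝ)) * (n.choose k : ℝ) *
        (1 + deriv ξ t) ^ k * Real.exp (((n:ℝ) - 2 * (k:ℝ)) / 2 * (t - ξ t))) :
    ∀ t₁ t₂ : ℝ, t₁ ≤ t₂ →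
      m t₂ - m t₁ =
        ∫ τ in t₁..t₂, Fk τ * (1 - deriv ξ τ) ^ (-((k:ℝ) - 1)) *
          Real.exp (-(((n:ℝ) + 2 * (k:ℝ)) / 2) * ξ τ) *
          Real.exp (((n:ℝ) - 2 * (k:ℝ)) / 2 * τ) := by
  intro t₁ t₂ _
  have h1 : ∀ t, deriv ξ t ≠ 1 := fun t => (abs_lt.mp (hξ' t)).2.ne
  obtain rfl : m = sigmaMass n k ξ := funext hm
  obtain rfl : Fk = sigmaOperator n k ξ := funext hFk
  have hderiv (t : ℝ) : HasDerivAt (sigmaMass n k ξ) (weightedSigmaOperator n k ξ t) t :=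
    hasDerivAt_sigmaMass (by omega) (by omega) hξ (h1 t)
  exact (integral_eq_sub_of_hasDerivAt (fun t _ => hderiv t)
    ((continuous_weightedSigmaOperator hξ h1).intervalIntegrable t₁ t₂)).symm

theorem stmt_5 (n k : ℕ) (hn : 5 ≤ n) (hk : 2 ≤ k) (hkn : 2 * k < n)
    (ξ : ℝ → ℝ) (hξ : ContDiff ℝ 2 ξ) (hξ' : ∀ t, |deriv ξ t| < 1)
    (Fk : ℝ → ℝ)
    (hFk : ∀ t, Fk t = (2:ℝ) ^ ((1:ℝ) - (k:ℝ)) * ((n - 1).choose (k - 1) : ℝ) *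
        Real.exp (2 * (k:ℝ) * ξ t) * (1 - (deriv ξ t) ^ 2) ^ (k - 1) *
        (deriv (deriv ξ) t + (((n:ℝ) - 2 * (k:ℝ)) / (2 * (k:ℝ))) * (1 - (deriv ξ t) ^ 2)))
    (m : ℝ → ℝ)
    (hm : ∀ t, m t = ((2:ℝ) ^ ((1:ℝ) - (k:ℝ)) / (n:ℝ)) * (n.choose k : ℝ) *
        (1 + deriv ξ t) ^ k * Real.exp (((n:ℝ) - 2 * (k:ℝ)) / 2 * (t - ξ t))) :
    ∀ t₁ t₂ : ℝ, t₁ ≤ t₂ →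
      m t₂ - m t₁ =
        ∫ τ in t₁..t₂, Fk τ * (1 - deriv ξ τ) ^ (-((k:ℝ) - 1)) *
          Real.exp (-(((n:ℝ) + 2 * (k:ℝ)) / 2) * ξ τ) *
          Real.exp (((n:ℝ) - 2 * (k:ℝ)) / 2 * τ) :=
  stmt_5_general n k hn hk ξ hξ hξ' Fk hFk m hm
end

section
/- Let n ≥ 5 and 2 ≤ k < n/2 be integers, λ > 0, and E(t) = Ξ(t + ln λ) with Ξ(t) = -ln(e^t/(1+e^{2t})) - ln(2^{1/2}·C(n,k)^{1/(2k)}). Then the Hamiltonian quantity H̄(E(t), E'(t)) = 2^{-k}·C(n,k)·e^{(2k-n)E(t)}(1-E'(t)²)^k - e^{-nE(t)} vanishes identically in t. -/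
open Real

theorem stmt_8 (n k : ℕ) (hn : 5 ≤ n) (hk : 2 ≤ k) (hkn : 2 * k < n)
    (lam : ℝ) (hlam : 0 < lam)
    (Xi E : ℝ → ℝ)
    (hXi : ∀ t, Xi t = -Real.log (Real.exp t / (1 + Real.exp (2 * t)))
        - Real.log ((2:ℝ) ^ ((1:ℝ)/2) * ((n.choose k : ℝ)) ^ ((1:ℝ) / (2 * (k:ℝ)))))
    (hE : ∀ t, E t = Xi (t + Real.log lam)) :
    ∀ t : ℝ,
      (2:ℝ) ^ (-(k:ℝ)) * (n.choose k : ℝ) * Real.exp ((2 * (k:ℝ) - (n:ℝ)) * E t) *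
        (1 - (deriv E t) ^ 2) ^ k - Real.exp (-(n:ℝ) * E t) = 0 := by
  intro t
  set L := Real.log lam with hL
  set C : ℝ := (n.choose k : ℝ) with hCdef
  have hC : (0:ℝ) < C := by
    have : 0 < n.choose k := Nat.choose_pos (by omega)
    simp only [hCdef]
    exact_mod_cast this
  set B : ℝ := (2:ℝ) ^ ((1:ℝ)/2) * C ^ ((1:ℝ) / (2 * (k:ℝ))) with hBdef
  have hB : (0:ℝ) < B := by positivity
  have hk0 : (k:ℝ) ≠ 0 := by positivity
  -- explicit form of E
  have hEfun : E = fun s => -(s + L) + Real.log (1 + Real.exp (2 * (s + L))) - Real.log B := by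
    funext s
    rw [hE, hXi]
    have hpos : (0:ℝ) < 1 + Real.exp (2 * (s + L)) := by positivity
    rw [Real.log_div (Real.exp_ne_zero _) (ne_of_gt hpos), Real.log_exp]
    ring
  set u : ℝ := Real.exp (2 * (t + L)) with hu
  have hupos : (0:ℝ) < u := Real.exp_pos _
  have h1u : (0:ℝ) < 1 + u := by positivity
  -- derivative of E
  have hderiv : deriv E t = -1 + 2 * u / (1 + u) := by
    have h1 : HasDerivAt (fun s : ℝ => 2 * (s + L)) 2 t := by
      simpa using ((hasDerivAt_id t).add_const L).const_mul 2
    have h2 : HasDerivAt (fun s : ℝ => Real.exp (2 * (s + L)))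
        (Real.exp (2 * (t + L)) * 2) t := h1.exp
    have h3 : HasDerivAt (fun s : ℝ => 1 + Real.exp (2 * (s + L)))
        (Real.exp (2 * (t + L)) * 2) t := h2.const_add 1
    have h4 := h3.log (ne_of_gt h1u)
    have h5 : HasDerivAt E
        (-1 + Real.exp (2 * (t + L)) * 2 / (1 + Real.exp (2 * (t + L)))) t := by
      rw [hEfun]
      simpa using (((hasDerivAt_id t).add_const L).neg.add h4).sub_const (Real.log B)
    rw [h5.deriv, ← hu]
    ring
  -- value of exp (E t)
  set e : ℝ := Real.exp (t + L) with he
  have hepos : (0:ℝ) < e := Real.exp_pos _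
  have hue : u = e ^ 2 := by
    rw [hu, he, ← Real.exp_nat_mul]
    norm_num
  have hXval : Real.exp (E t) = (1 + u) / (e * B) := by
    rw [hEfun]
    simp only
    rw [Real.exp_sub, Real.exp_add, Real.exp_neg, Real.exp_log h1u, Real.exp_log hB]
    rw [he]
    field_simp
  set X : ℝ := Real.exp (E t) with hX
  have hXpos : (0:ℝ) < X := Real.exp_pos _
  -- B^{2k} = 2^k * C
  have hBpow : B ^ (2 * k) = 2 ^ k * C := by
    rw [hBdef, mul_pow, ← Real.rpow_natCast ((2:ℝ) ^ ((1:ℝ)/2)) (2*k),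
      ← Real.rpow_natCast (C ^ ((1:ℝ) / (2 * (k:ℝ)))) (2*k),
      ← Real.rpow_mul (by norm_num : (0:ℝ) ≤ 2), ← Real.rpow_mul hC.le]
    have e1 : (1:ℝ)/2 * ((2*k : ℕ):ℝ) = (k:ℝ) := by push_cast; ring
    have e2 : (1:ℝ) / (2 * (k:ℝ)) * ((2*k : ℕ):ℝ) = 1 := by
      push_cast; field_simp
    rw [e1, e2, Real.rpow_one, Real.rpow_natCast]
  -- rewrite exponentials
  have hexp1 : Real.exp ((2 * (k:ℝ) - (n:ℝ)) * E t) = X ^ (2*k) / X ^ n := by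
    rw [sub_mul, Real.exp_sub,
      show (2 * (k:ℝ)) * E t = ((2*k : ℕ):ℝ) * E t by push_cast; ring,
      show ((n:ℝ)) * E t = ((n : ℕ):ℝ) * E t by norm_num,
      Real.exp_nat_mul, Real.exp_nat_mul, ← hX]
  have hexp2 : Real.exp (-(n:ℝ) * E t) = (X ^ n)⁻¹ := by
    rw [show (-(n:ℝ)) * E t = -((n:ℝ) * E t) by ring, Real.exp_neg,
      show ((n:ℝ)) * E t = ((n : ℕ):ℝ) * E t by norm_num, Real.exp_nat_mul, ← hX]
  have h2pow : (2:ℝ) ^ (-(k:ℝ)) = ((2:ℝ) ^ k)⁻¹ := by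
    rw [Real.rpow_neg (by norm_num), Real.rpow_natCast]
  have hd : 1 - (deriv E t) ^ 2 = 4 * u / (1 + u) ^ 2 := by
    rw [hderiv]; field_simp; ring
  rw [hexp1, hexp2, h2pow, hd]
  have hXn : X ^ n ≠ 0 := by positivity
  rw [sub_eq_zero]
  have key : ((2:ℝ) ^ k)⁻¹ * C * (X ^ (2*k)) * (4 * u / (1 + u) ^ 2) ^ k = 1 := by
    have hXk : X ^ (2*k) = (1 + u) ^ (2*k) / (e ^ (2*k) * B ^ (2*k)) := by
      rw [hXval, div_pow, mul_pow]
    have heu : e ^ (2*k) = u ^ k := by rw [pow_mul, ← hue]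
    rw [hXk, hBpow, heu, div_pow, pow_mul]
    have h2k : ((2:ℝ)^k) ≠ 0 := by positivity
    field_simp
    rw [show (4:ℝ) = 2 * 2 by norm_num, mul_pow, mul_pow]
    ring
  calc ((2:ℝ) ^ k)⁻¹ * C * (X ^ (2 * k) / X ^ n) * (4 * u / (1 + u) ^ 2) ^ k
      = ((2:ℝ) ^ k)⁻¹ * C * (X ^ (2 * k)) * (4 * u / (1 + u) ^ 2) ^ k / X ^ n := by ring
    _ = 1 / X ^ n := by rw [key]
    _ = (X ^ n)⁻¹ := one_div _
end

section
/- Let n ≥ 5 and 2 ≤ k < n/2 be integers, and K_max > 0. Then there exists a constant x̄ ∈ ℝ, depending only on n, k and K_max, such that: for any C² function ξ : I → ℝ on an open interval I satisfying F_k[ξ](t) ≤ K_max and |ξ'(t)| < 1 on I, if t ∈ I satisfies ξ(t) ≥ x̄ and ξ'(t) = 0, then ξ''(t) < 0. -/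
open Real

theorem stmt_11 (n k : ℕ) (hn : 5 ≤ n) (hk : 2 ≤ k) (hkn : 2 * k < n)
    (Kmax : ℝ) (hKmax : 0 < Kmax) :
    ∃ xbar : ℝ, ∀ (a b : ℝ) (ξ : ℝ → ℝ), ContDiffOn ℝ 2 ξ (Set.Ioo a b) →
      (∀ t ∈ Set.Ioo a b,
        (2:ℝ) ^ ((1:ℝ) - (k:ℝ)) * ((n - 1).choose (k - 1) : ℝ) *
          Real.exp (2 * (k:ℝ) * ξ t) * (1 - (deriv ξ t) ^ 2) ^ (k - 1) *
          (deriv (deriv ξ) t + (((n:ℝ) - 2 * (k:ℝ)) / (2 * (k:ℝ))) * (1 - (deriv ξ t) ^ 2))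
            ≤ Kmax ∧ |deriv ξ t| < 1) →
      ∀ t ∈ Set.Ioo a b, xbar ≤ ξ t → deriv ξ t = 0 → deriv (deriv ξ) t < 0 := by
  have hk0 : (0:ℝ) < (k:ℝ) := by positivity
  have hkr : (0:ℝ) < 2 * (k:ℝ) := by linarith
  have hq : (0:ℝ) < ((n:ℝ) - 2 * (k:ℝ)) / (2 * (k:ℝ)) := by
    apply div_pos _ hkr
    have : (2 * k : ℕ) < n := hkn
    have := Nat.cast_lt (α := ℝ) |>.2 this
    push_cast at this ⊢
    linarith
  have hA : (0:ℝ) < (2:ℝ) ^ ((1:ℝ) - (k:ℝ)) * ((n - 1).choose (k - 1) : ℝ) := by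
    apply mul_pos (Real.rpow_pos_of_pos (by norm_num) _)
    have : 0 < (n - 1).choose (k - 1) := Nat.choose_pos (by omega)
    exact_mod_cast this
  set A : ℝ := (2:ℝ) ^ ((1:ℝ) - (k:ℝ)) * ((n - 1).choose (k - 1) : ℝ) with hAdef
  set q : ℝ := ((n:ℝ) - 2 * (k:ℝ)) / (2 * (k:ℝ)) with hqdef
  set c : ℝ := A * q with hcdef
  have hc : 0 < c := mul_pos hA hq
  refine ⟨Real.log (Kmax / c + 1) / (2 * (k:ℝ)), ?_⟩
  intro a b ξ hξ hH t ht hx hd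
  by_contra h
  push_neg at h
  have h1 := (hH t ht).1
  rw [hd] at h1
  simp only [ne_eq, OfNat.ofNat_ne_zero, not_false_eq_true, zero_pow, sub_zero, one_pow,
    mul_one] at h1
  -- h1 : A * exp (2kξt) * (ξ'' + q * 1) ≤ Kmax
  have hexp : Kmax / c + 1 ≤ Real.exp (2 * (k:ℝ) * ξ t) := by
    have h2 : 2 * (k:ℝ) * (Real.log (Kmax / c + 1) / (2 * (k:ℝ))) ≤ 2 * (k:ℝ) * ξ t := by
      exact mul_le_mul_of_nonneg_left hx (le_of_lt hkr)
    calc Kmax / c + 1 = Real.exp (Real.log (Kmax / c + 1)) := by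
          rw [Real.exp_log]; positivity
      _ = Real.exp (2 * (k:ℝ) * (Real.log (Kmax / c + 1) / (2 * (k:ℝ)))) := by
          rw [mul_div_cancel₀]; exact ne_of_gt hkr
      _ ≤ _ := Real.exp_le_exp.2 h2
  have hstep : A * (Kmax / c + 1) * q ≤ A * Real.exp (2 * (k:ℝ) * ξ t) *
      (deriv (deriv ξ) t + q * (1 - 0 ^ 2)) := by
    have hE : 0 < Real.exp (2 * (k:ℝ) * ξ t) := Real.exp_pos _
    have h3 : q ≤ deriv (deriv ξ) t + q * (1 - 0 ^ 2) := by nlinarith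
    have h4 : A * (Kmax / c + 1) ≤ A * Real.exp (2 * (k:ℝ) * ξ t) :=
      mul_le_mul_of_nonneg_left hexp (le_of_lt hA)
    have h5 : 0 < A * (Kmax / c + 1) := by positivity
    nlinarith
  have hfinal : A * (Kmax / c + 1) * q = Kmax + c := by
    field_simp [hcdef]
    ring
  nlinarith [hstep, h1]
end

section
/- Let n ≥ 3 be an integer and c < 0. The function φ₂(t) = tanh(t)·∫_c^t cosh(τ)^n/sinh(τ)² dτ satisfies the linear ODE φ'' - (n-2)·tanh(t)·φ' + n·sech²(t)·φ = 0 on the interval (-∞, 0). -/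
/-!
`tanh` solves the equation, since `tanh' = 1 - tanh²` and `tanh'' = -2 tanh (1 - tanh²)`. Writing
`φ = tanh · F` with `F' = g := cosh^n / sinh²`, the terms in `F` cancel for that reason, and what is
left is `tanh · g' + (2 (1 - tanh²) - (n - 2) tanh²) g`, which vanishes because of the logarithmic
derivative `g' / g = n tanh - 2 / tanh` (reduction of order: `g = cosh^(n-2) / tanh²` is the
Wronskian over the square of the known solution).
-/

open Real intervalIntegral Filter Topology

theorem hasDerivAt_integral_of_continuousOn {E : Type*} [NormedAddCommGroup E] [NormedSpace ℝ E]
    [CompleteSpace E] {f : ℝ → E} {s : Set ℝ} {a b : ℝ} (hs : IsOpen s) (hf : ContinuousOn f s)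
    (hab : Set.uIcc a b ⊆ s) :
    HasDerivAt (fun u => ∫ x in a..u, f x) (f b) b := by
  have hb : b ∈ s := hab Set.right_mem_uIcc
  exact integral_hasDerivAt_right (hf.mono hab).intervalIntegrable
    (hf.stronglyMeasurableAtFilter hs b hb) (hf.continuousAt (hs.mem_nhds hb))

theorem deriv_deriv_mul_eq {u v u' v' : ℝ → ℝ} {u'' v'' x : ℝ}
    (hu : ∀ᶠ y in 𝓝 x, HasDerivAt u (u' y) y) (hv : ∀ᶠ y in 𝓝 x, HasDerivAt v (v' y) y)
    (hu' : HasDerivAt u' u'' x) (hv' : HasDerivAt v' v'' x) :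
    deriv (deriv fun y => u y * v y) x = u'' * v x + 2 * (u' x * v' x) + u x * v'' := by
  have hderiv : deriv (fun y => u y * v y) =ᶠ[𝓝 x] fun y => u' y * v y + u y * v' y := by
    filter_upwards [hu, hv] with y huy hvy using (huy.fun_mul hvy).deriv
  rw [hderiv.deriv_eq]
  exact ((hu'.fun_mul hv.self_of_nhds).add (hu.self_of_nhds.fun_mul hv')).deriv.trans (by ring)

namespace Real

theorem tanh_ne_zero {x : ℝ} (hx : x ≠ 0) : tanh x ≠ 0 := by
  rw [tanh_eq_sinh_div_cosh]
  exact div_ne_zero (sinh_ne_zero.mpr hx) (cosh_pos x).ne'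

theorem one_div_cosh_sq (x : ℝ) : (1 / cosh x) ^ 2 = 1 - tanh x ^ 2 := by
  have hcosh : cosh x ≠ 0 := (cosh_pos x).ne'
  rw [tanh_eq_sinh_div_cosh]
  field_simp
  linear_combination -(cosh_sq_sub_sinh_sq x)

theorem hasDerivAt_tanh (x : ℝ) : HasDerivAt tanh (1 - tanh x ^ 2) x := by
  have hcosh : cosh x ≠ 0 := (cosh_pos x).ne'
  rw [show tanh = sinh / cosh from funext tanh_eq_sinh_div_cosh]
  refine ((hasDerivAt_sinh x).div (hasDerivAt_cosh x) hcosh).congr_deriv ?_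
  simp only [Pi.div_apply]
  field_simp

theorem hasDerivAt_one_sub_tanh_sq (x : ℝ) :
    HasDerivAt (fun y => 1 - tanh y ^ 2) (-2 * tanh x * (1 - tanh x ^ 2)) x :=
  (((hasDerivAt_tanh x).fun_pow 2).const_sub 1).congr_deriv (by ring)

theorem hasDerivAt_cosh_pow (n : ℕ) (x : ℝ) :
    HasDerivAt (fun y => cosh y ^ n) (n * cosh x ^ n * tanh x) x := by
  refine ((hasDerivAt_cosh x).fun_pow n).congr_deriv ?_
  rcases n with _ | n
  · simp
  · have hcosh : cosh x ≠ 0 := (cosh_pos x).ne'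
    rw [tanh_eq_sinh_div_cosh, Nat.add_sub_cancel, pow_succ]
    field_simp

theorem continuousOn_cosh_pow_div_sinh_sq (n : ℕ) :
    ContinuousOn (fun y => cosh y ^ n / sinh y ^ 2) {0}ᶜ :=
  continuousOn_of_forall_continuousAt fun _ hy =>
    (continuous_cosh.fun_pow n).continuousAt.div (continuous_sinh.fun_pow 2).continuousAt
      (pow_ne_zero 2 (sinh_ne_zero.mpr hy))

theorem hasDerivAt_cosh_pow_div_sinh_sq (n : ℕ) {x : ℝ} (hx : x ≠ 0) :
    HasDerivAt (fun y => cosh y ^ n / sinh y ^ 2)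
      (cosh x ^ n / sinh x ^ 2 * (n * tanh x - 2 / tanh x)) x := by
  have hsinh : sinh x ≠ 0 := sinh_ne_zero.mpr hx
  have hcosh : cosh x ≠ 0 := (cosh_pos x).ne'
  refine ((hasDerivAt_cosh_pow n x).div ((hasDerivAt_sinh x).fun_pow 2)
    (pow_ne_zero 2 hsinh)).congr_deriv ?_
  rw [tanh_eq_sinh_div_cosh]
  field_simp
  ring

end Real

theorem stmt_15_general (n : ℕ) (c : ℝ) (hc : c < 0)
    (φ : ℝ → ℝ)
    (hφ : ∀ t, φ t = Real.tanh t * ∫ τ in c..t, Real.cosh τ ^ n / Real.sinh τ ^ 2) :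
    ∀ t : ℝ, t < 0 →
      deriv (deriv φ) t - ((n:ℝ) - 2) * Real.tanh t * deriv φ t +
        (n:ℝ) * (1 / Real.cosh t) ^ 2 * φ t = 0 := by
  intro t ht
  obtain rfl : φ = _ := funext hφ
  have hF : ∀ x < 0, HasDerivAt (fun u => ∫ τ in c..u, cosh τ ^ n / sinh τ ^ 2)
      (cosh x ^ n / sinh x ^ 2) x := fun x hx =>
    hasDerivAt_integral_of_continuousOn isOpen_compl_singleton
      (continuousOn_cosh_pow_div_sinh_sq n) fun y hy => (hy.2.trans_lt (max_lt hc hx)).ne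
  have hT : tanh t ≠ 0 := tanh_ne_zero ht.ne
  rw [deriv_deriv_mul_eq (.of_forall hasDerivAt_tanh)
      (by filter_upwards [isOpen_Iio.mem_nhds ht] with x hx using hF x hx)
      (hasDerivAt_one_sub_tanh_sq t) (hasDerivAt_cosh_pow_div_sinh_sq n ht.ne),
    ((hasDerivAt_tanh t).fun_mul (hF t ht)).deriv, one_div_cosh_sq]
  field_simp
  ring

theorem stmt_15 (n : ℕ) (hn : 3 ≤ n) (c : ℝ) (hc : c < 0)
    (φ : ℝ → ℝ)
    (hφ : ∀ t, φ t = Real.tanh t * ∫ τ in c..t, Real.cosh τ ^ n / Real.sinh τ ^ 2) :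
    ∀ t : ℝ, t < 0 →
      deriv (deriv φ) t - ((n:ℝ) - 2) * Real.tanh t * deriv φ t +
        (n:ℝ) * (1 / Real.cosh t) ^ 2 * φ t = 0 :=
  stmt_15_general n c hc φ hφ
end

section
/- Let n ≥ 5 and 2 ≤ k < n/2 be integers, let K : ℝ → ℝ be C¹ with K' integrable against e^{-nξ}, and let ξ : ℝ → ℝ be a C² solution of F_k[ξ] = K with |ξ'| < 1 on ℝ such that ξ(t) - |t| is bounded on ℝ. Then for every t ∈ ℝ, H(t, ξ(t), ξ'(t)) = -∫_{-∞}^{t} K'(τ)·e^{-nξ(τ)} dτ = ∫_{t}^{∞} K'(τ)·e^{-nξ(τ)} dτ, where H(t,x,y) = 2^{-k}·C(n,k)·e^{(2k-n)x}(1-y²)^k - K(t)·e^{-nx}. In particular, ∫_{-∞}^{∞} K'(τ)·e^{-nξ(τ)} dτ = 0 (Kazdan–Warner-type identity). -/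
/-!
Along a solution of `F_k[ξ] = K`, the function `t ↦ H(t, ξ t, ξ' t)` has derivative
`-K' e^{-nξ}`. This is integrable, so `H` has limits at `±∞`, and all three identities are the
fundamental theorem of calculus once both limits are shown to vanish.

Write `v = e^{(2k-n)ξ}` and `w = 1 - ξ'²`. Since `ξ(t) ≥ |t| - C` and `2k < n`, `v → 0` at both
ends. Eliminating `K` with the equation gives `H = b v w^k - a v w^{k-1} ξ''` with `a > 0`, and
`w^k ≤ 1`, so a nonzero limit of `H` would make `v · (w^{k-1} ξ'')` tend to a nonzero constant.
But `w^{k-1} ξ''` is the derivative of `P(ξ')`, where `P` is a primitive of `(1 - y²)^{k-1}`,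
and `P(ξ')` is bounded because `|ξ'| < 1`. A bounded function cannot have a derivative whose
absolute value tends to `∞` (mean value theorem on intervals of length one).
-/

open Real MeasureTheory Filter Set Topology

lemma not_tendsto_abs_deriv_atTop_atTop {g g' : ℝ → ℝ} (hg : ∀ t, HasDerivAt g (g' t) t)
    {B : ℝ} (hB : ∀ t, |g t| ≤ B) : ¬ Tendsto (fun t => |g' t|) atTop atTop := by
  intro h
  obtain ⟨T, hT⟩ := eventually_atTop.1 (h.eventually_gt_atTop (2 * B))
  obtain ⟨c, hc, hslope⟩ := exists_hasDerivAt_eq_slope g g' (lt_add_one T)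
    (fun x _ => (hg x).continuousAt.continuousWithinAt) (fun x _ => hg x)
  have hgc := hT c hc.1.le
  rw [hslope, add_sub_cancel_left, div_one] at hgc
  linarith [abs_sub (g (T + 1)) (g T), hB (T + 1), hB T]

lemma not_tendsto_abs_deriv_atBot_atTop {g g' : ℝ → ℝ} (hg : ∀ t, HasDerivAt g (g' t) t)
    {B : ℝ} (hB : ∀ t, |g t| ≤ B) : ¬ Tendsto (fun t => |g' t|) atBot atTop := fun h =>
  not_tendsto_abs_deriv_atTop_atTop (g := g ∘ Neg.neg) (g' := fun t => -g' (-t))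
    (fun t => by simpa using (hg (-t)).comp t (hasDerivAt_neg t)) (fun t => hB (-t))
    ((h.comp tendsto_neg_atTop_atBot).congr fun t => (abs_neg _).symm)

lemma eq_zero_of_tendsto_mul_deriv {l : Filter ℝ} (hl : l = atTop ∨ l = atBot)
    {g g' w : ℝ → ℝ} (hg : ∀ t, HasDerivAt g (g' t) t) {B : ℝ} (hB : ∀ t, |g t| ≤ B)
    (hw : Tendsto w l (𝓝[>] 0)) {M : ℝ} (hM : Tendsto (fun t => w t * g' t) l (𝓝 M)) :
    M = 0 := by
  by_contra hM0
  have hg' : Tendsto (fun t => |g' t|) l atTop := by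
    refine (hw.inv_tendsto_nhdsGT_zero.atTop_mul_pos (abs_pos.2 hM0) hM.abs).congr' ?_
    filter_upwards [(tendsto_nhdsWithin_iff.1 hw).2] with t (ht : 0 < w t)
    simp [abs_mul, abs_of_pos ht, ht.ne']
  rcases hl with rfl | rfl
  · exact not_tendsto_abs_deriv_atTop_atTop hg hB hg'
  · exact not_tendsto_abs_deriv_atBot_atTop hg hB hg'

lemma exists_bounded_hasDerivAt_comp {p : ℝ → ℝ} (hp : Continuous p) {y y' : ℝ → ℝ}
    (hy : ∀ t, HasDerivAt y (y' t) t) {s : Set ℝ} (hs : IsCompact s) (hys : ∀ t, y t ∈ s) :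
    ∃ g : ℝ → ℝ, (∀ t, HasDerivAt g (p (y t) * y' t) t) ∧ ∃ B, ∀ t, |g t| ≤ B := by
  have hP (u : ℝ) : HasDerivAt (fun u => ∫ x in (0 : ℝ)..u, p x) (p u) u :=
    (hp.integral_hasStrictDerivAt 0 u).hasDerivAt
  obtain ⟨B, hB⟩ := hs.exists_bound_of_continuousOn
    (continuous_iff_continuousAt.2 fun u => (hP u).continuousAt).continuousOn
  exact ⟨_, fun t => (hP (y t)).comp t (hy t), B, fun t => hB _ (hys t)⟩

lemma natCast_mul_choose_sub_one (n : ℕ) {k : ℕ} (hk : 1 ≤ k) :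
    (n : ℝ) * (n - 1).choose (k - 1) = k * n.choose k := by
  obtain ⟨m, rfl⟩ : ∃ m, k = m + 1 := ⟨k - 1, by omega⟩
  cases n with
  | zero => simp
  | succ n => exact_mod_cast (Nat.add_one_mul_choose_eq n m).trans (mul_comm _ _)

/-- The operator `F_k[ξ]`. -/
noncomputable def sigmaCurvature (n k : ℕ) (ξ : ℝ → ℝ) (t : ℝ) : ℝ :=
  (2:ℝ) ^ ((1:ℝ) - (k:ℝ)) * ((n - 1).choose (k - 1) : ℝ) *
    Real.exp (2 * (k:ℝ) * ξ t) * (1 - (deriv ξ t) ^ 2) ^ (k - 1) *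
    (deriv (deriv ξ) t + (((n:ℝ) - 2 * (k:ℝ)) / (2 * (k:ℝ))) * (1 - (deriv ξ t) ^ 2))

/-- The function `H(t, x, y)`. -/
noncomputable def hamiltonian (n k : ℕ) (K : ℝ → ℝ) (t x y : ℝ) : ℝ :=
  (2:ℝ) ^ (-(k:ℝ)) * (n.choose k : ℝ) * Real.exp ((2 * (k:ℝ) - (n:ℝ)) * x) * (1 - y ^ 2) ^ k
    - K t * Real.exp (-(n:ℝ) * x)

lemma hasDerivAt_hamiltonian {n k : ℕ} (hk : 1 ≤ k) {K ξ : ℝ → ℝ} {t : ℝ}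
    (hξ : HasDerivAt ξ (deriv ξ t) t) (hξ' : HasDerivAt (deriv ξ) (deriv (deriv ξ) t) t)
    (hK : HasDerivAt K (deriv K t) t) (heq : sigmaCurvature n k ξ t = K t) :
    HasDerivAt (fun s => hamiltonian n k K s (ξ s) (deriv ξ s))
      (-(deriv K t * exp (-n * ξ t))) t := by
  have h := (((hξ.const_mul ((2:ℝ) * k - n)).exp.const_mul ((2:ℝ) ^ (-(k:ℝ)) * n.choose k)).mul
    (((hasDerivAt_const t (1:ℝ)).sub (hξ'.pow 2)).pow k)).sub
    (hK.mul (hξ.const_mul (-(n:ℝ))).exp)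
  refine h.congr_deriv ?_
  rw [← heq, sigmaCurvature]
  obtain ⟨m, rfl⟩ : ∃ m, k = m + 1 := ⟨k - 1, by omega⟩
  have hchoose : (n.choose (m + 1) : ℝ) = n * (n - 1).choose m / (m + 1) := by
    rw [eq_div_iff (by positivity)]
    simpa [mul_comm] using (natCast_mul_choose_sub_one n hk).symm
  have hexp : exp ((2 * ((m + 1 : ℕ) : ℝ) - n) * ξ t) =
      exp (2 * ((m + 1 : ℕ) : ℝ) * ξ t) * exp (-n * ξ t) := by
    rw [← exp_add]; ring_nf
  have htwo : (2:ℝ) ^ ((1:ℝ) - ((m + 1 : ℕ) : ℝ)) = 2 * 2 ^ (-((m + 1 : ℕ) : ℝ)) := by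
    rw [sub_eq_add_neg, rpow_add two_pos, rpow_one]
  simp only [Pi.sub_apply, Pi.pow_apply, hexp, htwo, hchoose, Nat.add_sub_cancel]
  push_cast
  field_simp
  ring

lemma eq_zero_of_tendsto_hamiltonian {n k : ℕ} (hk : 1 ≤ k) (hkn : 2 * k < n) {K ξ : ℝ → ℝ}
    (hξ' : ∀ t, HasDerivAt (deriv ξ) (deriv (deriv ξ) t) t) (hξ'_lt : ∀ t, |deriv ξ t| < 1)
    (heq : ∀ t, sigmaCurvature n k ξ t = K t) {l : Filter ℝ} (hl : l = atTop ∨ l = atBot)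
    (hξl : Tendsto ξ l atTop) {L : ℝ}
    (hL : Tendsto (fun t => hamiltonian n k K t (ξ t) (deriv ξ t)) l (𝓝 L)) : L = 0 := by
  have hw_mem (t : ℝ) : 0 < 1 - deriv ξ t ^ 2 ∧ 1 - deriv ξ t ^ 2 ≤ 1 := by
    have := abs_lt.1 (hξ'_lt t)
    constructor <;> nlinarith
  set v := fun t => exp ((2 * k - n) * ξ t) with hv
  set w := fun t => 1 - deriv ξ t ^ 2
  set a : ℝ := 2 ^ ((1:ℝ) - k) * (n - 1).choose (k - 1)
  set c : ℝ := (n - 2 * k) / (2 * k)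
  set b : ℝ := 2 ^ (-(k:ℝ)) * n.choose k - a * c
  have ha : 0 < a := by
    have := Nat.choose_pos (show k - 1 ≤ n - 1 by omega)
    positivity
  have hH (t : ℝ) : hamiltonian n k K t (ξ t) (deriv ξ t) =
      b * (v t * w t ^ k) - a * (v t * (w t ^ (k - 1) * deriv (deriv ξ) t)) := by
    have hexp : exp (2 * k * ξ t) * exp (-n * ξ t) = v t := by
      rw [hv, ← exp_add]; ring_nf
    have hpow : w t ^ (k - 1) * w t = w t ^ k := pow_sub_one_mul (by omega) _
    rw [hamiltonian, ← heq t, sigmaCurvature]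
    linear_combination (-(a * w t ^ (k - 1) * deriv (deriv ξ) t) - a * c * w t ^ k) * hexp
      - a * c * exp (2 * k * ξ t) * exp (-n * ξ t) * hpow
  have hv_lim : Tendsto v l (𝓝[>] 0) := by
    have hcoef : (2 * k - n : ℝ) < 0 := by
      have : ((2 * k : ℕ) : ℝ) < n := by exact_mod_cast hkn
      push_cast at this; linarith
    exact tendsto_nhdsWithin_iff.2 ⟨tendsto_exp_atBot.comp (hξl.const_mul_atTop_of_neg hcoef),
      Eventually.of_forall fun t => exp_pos _⟩
  have hvw_lim : Tendsto (fun t => v t * w t ^ k) l (𝓝 0) :=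
    squeeze_zero (fun t => mul_nonneg (exp_pos _).le (pow_nonneg (hw_mem t).1.le _))
      (fun t => mul_le_of_le_one_right (exp_pos _).le (pow_le_one₀ (hw_mem t).1.le (hw_mem t).2))
      (tendsto_nhds_of_tendsto_nhdsWithin hv_lim)
  obtain ⟨g, hg, B, hB⟩ := exists_bounded_hasDerivAt_comp (p := fun y => (1 - y ^ 2) ^ (k - 1))
    (by fun_prop) hξ' isCompact_Icc (fun t => abs_le.1 (hξ'_lt t).le)
  have hM := eq_zero_of_tendsto_mul_deriv hl hg hB hv_lim
    ((((hvw_lim.const_mul b).sub hL).div_const a).congr fun t => by rw [hH]; field_simp; ring)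
  rw [mul_zero, zero_sub, div_eq_zero_iff] at hM
  exact neg_eq_zero.1 (hM.resolve_right ha.ne')

theorem stmt_16_general (n k : ℕ) (hk : 2 ≤ k) (hkn : 2 * k < n)
    (K : ℝ → ℝ) (hK : ContDiff ℝ 1 K)
    (ξ : ℝ → ℝ) (hξ : ContDiff ℝ 2 ξ)
    (hInt : Integrable (fun τ => deriv K τ * Real.exp (-(n:ℝ) * ξ τ)))
    (heq : ∀ t,
      (2:ℝ) ^ ((1:ℝ) - (k:ℝ)) * ((n - 1).choose (k - 1) : ℝ) *
        Real.exp (2 * (k:ℝ) * ξ t) * (1 - (deriv ξ t) ^ 2) ^ (k - 1) *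
        (deriv (deriv ξ) t + (((n:ℝ) - 2 * (k:ℝ)) / (2 * (k:ℝ))) * (1 - (deriv ξ t) ^ 2)) = K t)
    (hξ' : ∀ t, |deriv ξ t| < 1)
    (hbd : ∃ C : ℝ, ∀ t, abs (ξ t - abs t) ≤ C)
    (H : ℝ → ℝ → ℝ → ℝ)
    (hH : ∀ t x y, H t x y = (2:ℝ) ^ (-(k:ℝ)) * (n.choose k : ℝ) *
        Real.exp ((2 * (k:ℝ) - (n:ℝ)) * x) * (1 - y ^ 2) ^ k - K t * Real.exp (-(n:ℝ) * x)) :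
    (∀ t : ℝ,
      H t (ξ t) (deriv ξ t) = -∫ τ in Set.Iic t, deriv K τ * Real.exp (-(n:ℝ) * ξ τ) ∧
      H t (ξ t) (deriv ξ t) = ∫ τ in Set.Ioi t, deriv K τ * Real.exp (-(n:ℝ) * ξ τ)) ∧
    ∫ τ : ℝ, deriv K τ * Real.exp (-(n:ℝ) * ξ τ) = 0 := by
  have hk1 : 1 ≤ k := by omega
  have hξd (t : ℝ) : HasDerivAt ξ (deriv ξ t) t := (hξ.differentiable (by norm_num) t).hasDerivAt
  have hξd2 (t : ℝ) : HasDerivAt (deriv ξ) (deriv (deriv ξ) t) t :=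
    ((hξ.iterate_deriv' 1 1).differentiable one_ne_zero t).hasDerivAt
  have hder (t : ℝ) := hasDerivAt_hamiltonian hk1 (hξd t) (hξd2 t)
    (hK.differentiable one_ne_zero t).hasDerivAt (heq t)
  obtain ⟨C, hC⟩ := hbd
  have hξ_lim {l : Filter ℝ} (hl : Tendsto abs l atTop) : Tendsto ξ l atTop :=
    tendsto_atTop_mono (fun t => by linarith [(abs_le.1 (hC t)).1])
      (tendsto_atTop_add_const_right _ (-C) hl)
  have htop := tendsto_limUnder_of_hasDerivAt_of_integrableOn_Ioi (a := 0) (fun t _ => hder t)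
    hInt.neg.integrableOn
  have hbot := tendsto_limUnder_of_hasDerivAt_of_integrableOn_Iic (a := 0) (fun t _ => hder t)
    hInt.neg.integrableOn
  rw [eq_zero_of_tendsto_hamiltonian hk1 hkn hξd2 hξ' heq (.inl rfl)
    (hξ_lim tendsto_abs_atTop_atTop) htop] at htop
  rw [eq_zero_of_tendsto_hamiltonian hk1 hkn hξd2 hξ' heq (.inr rfl)
    (hξ_lim tendsto_abs_atBot_atTop) hbot] at hbot
  refine ⟨fun t => ⟨?_, ?_⟩, ?_⟩
  · have := integral_Iic_of_hasDerivAt_of_tendsto' (a := t) (fun s _ => hder s)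
      hInt.neg.integrableOn hbot
    rw [integral_neg, sub_zero] at this
    exact (hH _ _ _).trans this.symm
  · have := integral_Ioi_of_hasDerivAt_of_tendsto' (a := t) (fun s _ => hder s)
      hInt.neg.integrableOn htop
    rw [integral_neg, zero_sub, neg_inj] at this
    exact (hH _ _ _).trans this.symm
  · have := integral_of_hasDerivAt_of_tendsto hder hInt.neg hbot htop
    rwa [integral_neg, sub_zero, neg_eq_zero] at this

theorem stmt_16 (n k : ℕ) (hn : 5 ≤ n) (hk : 2 ≤ k) (hkn : 2 * k < n)
    (K : ℝ → ℝ) (hK : ContDiff ℝ 1 K)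
    (ξ : ℝ → ℝ) (hξ : ContDiff ℝ 2 ξ)
    (hInt : Integrable (fun τ => deriv K τ * Real.exp (-(n:ℝ) * ξ τ)))
    (heq : ∀ t,
      (2:ℝ) ^ ((1:ℝ) - (k:ℝ)) * ((n - 1).choose (k - 1) : ℝ) *
        Real.exp (2 * (k:ℝ) * ξ t) * (1 - (deriv ξ t) ^ 2) ^ (k - 1) *
        (deriv (deriv ξ) t + (((n:ℝ) - 2 * (k:ℝ)) / (2 * (k:ℝ))) * (1 - (deriv ξ t) ^ 2)) = K t)
    (hξ' : ∀ t, |deriv ξ t| < 1)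
    (hbd : ∃ C : ℝ, ∀ t, abs (ξ t - abs t) ≤ C)
    (H : ℝ → ℝ → ℝ → ℝ)
    (hH : ∀ t x y, H t x y = (2:ℝ) ^ (-(k:ℝ)) * (n.choose k : ℝ) *
        Real.exp ((2 * (k:ℝ) - (n:ℝ)) * x) * (1 - y ^ 2) ^ k - K t * Real.exp (-(n:ℝ) * x)) :
    (∀ t : ℝ,
      H t (ξ t) (deriv ξ t) = -∫ τ in Set.Iic t, deriv K τ * Real.exp (-(n:ℝ) * ξ τ) ∧
      H t (ξ t) (deriv ξ t) = ∫ τ in Set.Ioi t, deriv K τ * Real.exp (-(n:ℝ) * ξ τ)) ∧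
    ∫ τ : ℝ, deriv K τ * Real.exp (-(n:ℝ) * ξ τ) = 0 :=
  stmt_16_general n k hk hkn K hK ξ hξ hInt heq hξ' hbd H hH
end

section
/- Let n ≥ 5 and 2 ≤ k < n/2 be integers, b, c real parameters, and ξ : ℝ → ℝ a C² function with |ξ'| < 1. Define m_{b,c}(t) = (2^{1-k}/n)·C(n,k)·(1-ξ'(t))^{-k(b+c)}·(1+ξ'(t))^{-k(b-c)}·e^{(n-2k)(b·ξ(t) + c·t)}. Then for all t₁ ≤ t₂, m_{b,c}(t₂) - m_{b,c}(t₁) = 2·∫_{t₁}^{t₂} F_k[ξ](τ)·(1-ξ'(τ))^{-k(b+c+1)}·(1+ξ'(τ))^{-k(b-c+1)}·(b·ξ'(τ) + c)·e^{((n-2k)b - 2k)ξ(τ) + (n-2k)c·τ} dτ, where F_k[ξ](t) = 2^{1-k}·C(n-1,k-1)·e^{2kξ(t)}(1-ξ'(t)²)^{k-1}(ξ''(t) + ((n-2k)/(2k))(1-ξ'(t)²)). -/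
open Real intervalIntegral

/-! With `u = ξ'`, the logarithmic derivative of `(1 - u)^(-k(b+c)) (1 + u)^(-k(b-c))` is
`2k (b u + c) u' / (1 - u²)`, and that of the exponential factor is `(n - 2k)(b u + c)`; their sum
is `(b u + c) · 2k (u' + (n - 2k)/(2k) (1 - u²)) / (1 - u²)`, which is the integrand once the
constants are matched by `n C(n-1, k-1) = k C(n, k)`. The identity is then the fundamental
theorem of calculus. -/

lemma Nat.cast_choose_pred_pred {K : Type*} [Field K] [CharZero K] {n k : ℕ} (hn : n ≠ 0)
    (hk : k ≠ 0) : ((n - 1).choose (k - 1) : K) = n.choose k * k / n := by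
  obtain ⟨n, rfl⟩ := Nat.exists_eq_succ_of_ne_zero hn
  obtain ⟨k, rfl⟩ := Nat.exists_eq_succ_of_ne_zero hk
  rw [eq_div_iff (by positivity)]
  exact_mod_cast (mul_comm _ _).trans (Nat.add_one_mul_choose_eq n k)

lemma hasDerivAt_one_sub_rpow_mul_one_add_rpow_mul_exp {ξ u : ℝ → ℝ} {t u' : ℝ}
    (hξ : HasDerivAt ξ (u t) t) (hu : HasDerivAt u u' t) (hut : |u t| < 1) (k b c l : ℝ) :
    HasDerivAt (fun s ↦ (1 - u s) ^ (-k * (b + c)) * (1 + u s) ^ (-k * (b - c)) *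
        exp (l * (b * ξ s + c * s)))
      ((1 - u t) ^ (-k * (b + c) - 1) * (1 + u t) ^ (-k * (b - c) - 1) *
        exp (l * (b * ξ t + c * t)) * (b * u t + c) * (2 * k * u' + l * (1 - u t ^ 2))) t := by
  obtain ⟨hA, hB⟩ : 0 < 1 - u t ∧ 0 < 1 + u t := by constructor <;> linarith [abs_lt.mp hut]
  have hE := (((hξ.const_mul b).add ((hasDerivAt_id t).const_mul c)).const_mul l).exp
  refine ((((hu.const_sub 1).rpow_const (p := -k * (b + c)) (Or.inl hA.ne')).mul
    ((hu.const_add 1).rpow_const (p := -k * (b - c)) (Or.inl hB.ne'))).mul hE).congr_deriv ?_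
  simp only [Pi.mul_apply, Pi.add_apply, id, rpow_sub_one hA.ne', rpow_sub_one hB.ne']
  field_simp
  ring

lemma two_mul_integrand_eq {n k : ℕ} (hn : n ≠ 0) (hk : k ≠ 0) {u : ℝ} (hu : |u| < 1)
    (b c x u' τ : ℝ) :
    2 * ((2:ℝ) ^ ((1:ℝ) - k) * ((n - 1).choose (k - 1) : ℝ) * exp (2 * k * x) *
        (1 - u ^ 2) ^ (k - 1) * (u' + ((n - 2 * k) / (2 * k)) * (1 - u ^ 2)) *
        (1 - u) ^ (-(k:ℝ) * (b + c + 1)) * (1 + u) ^ (-(k:ℝ) * (b - c + 1)) * (b * u + c) *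
        exp (((n - 2 * k) * b - 2 * k) * x + (n - 2 * k) * c * τ)) =
      (2:ℝ) ^ ((1:ℝ) - k) / n * n.choose k *
        ((1 - u) ^ (-k * (b + c) - 1) * (1 + u) ^ (-k * (b - c) - 1) *
          exp ((n - 2 * k) * (b * x + c * τ)) * (b * u + c) *
          (2 * k * u' + (n - 2 * k) * (1 - u ^ 2))) := by
  obtain ⟨hA, hB⟩ : 0 < 1 - u ∧ 0 < 1 + u := by constructor <;> linarith [abs_lt.mp hu]
  have hpow : (1 - u ^ 2) ^ (k - 1) * (1 - u) ^ (-(k:ℝ) * (b + c + 1)) *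
      (1 + u) ^ (-(k:ℝ) * (b - c + 1)) =
        (1 - u) ^ (-k * (b + c) - 1) * (1 + u) ^ (-k * (b - c) - 1) := by
    rw [show 1 - u ^ 2 = (1 - u) * (1 + u) by ring, mul_pow,
      show -k * (b + c) - 1 = ((k - 1 : ℕ) : ℝ) + -k * (b + c + 1) by
        rw [Nat.cast_sub (Nat.one_le_iff_ne_zero.mpr hk)]; ring,
      show -k * (b - c) - 1 = ((k - 1 : ℕ) : ℝ) + -k * (b - c + 1) by
        rw [Nat.cast_sub (Nat.one_le_iff_ne_zero.mpr hk)]; ring,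
      rpow_add hA, rpow_add hB, rpow_natCast, rpow_natCast]
    ring
  have hexp : exp (2 * k * x) * exp (((n - 2 * k) * b - 2 * k) * x + (n - 2 * k) * c * τ) =
      exp ((n - 2 * k) * (b * x + c * τ)) := by
    rw [← exp_add]; congr 1; ring
  rw [← hpow, ← hexp, Nat.cast_choose_pred_pred hn hk]
  field_simp

theorem stmt_17_general (n k : ℕ) (hk : 2 ≤ k) (hkn : 2 * k < n)
    (b c : ℝ)
    (ξ : ℝ → ℝ) (hξ : ContDiff ℝ 2 ξ) (hξ' : ∀ t, |deriv ξ t| < 1)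
    (Fk : ℝ → ℝ)
    (hFk : ∀ t, Fk t = (2:ℝ) ^ ((1:ℝ) - (k:ℝ)) * ((n - 1).choose (k - 1) : ℝ) *
        Real.exp (2 * (k:ℝ) * ξ t) * (1 - (deriv ξ t) ^ 2) ^ (k - 1) *
        (deriv (deriv ξ) t + (((n:ℝ) - 2 * (k:ℝ)) / (2 * (k:ℝ))) * (1 - (deriv ξ t) ^ 2)))
    (m : ℝ → ℝ)
    (hm : ∀ t, m t = ((2:ℝ) ^ ((1:ℝ) - (k:ℝ)) / (n:ℝ)) * (n.choose k : ℝ) *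
        (1 - deriv ξ t) ^ (-(k:ℝ) * (b + c)) * (1 + deriv ξ t) ^ (-(k:ℝ) * (b - c)) *
        Real.exp (((n:ℝ) - 2 * (k:ℝ)) * (b * ξ t + c * t))) :
    ∀ t₁ t₂ : ℝ, t₁ ≤ t₂ →
      m t₂ - m t₁ =
        2 * ∫ τ in t₁..t₂, Fk τ * (1 - deriv ξ τ) ^ (-(k:ℝ) * (b + c + 1)) *
          (1 + deriv ξ τ) ^ (-(k:ℝ) * (b - c + 1)) * (b * deriv ξ τ + c) *
          Real.exp ((((n:ℝ) - 2 * (k:ℝ)) * b - 2 * (k:ℝ)) * ξ τ + ((n:ℝ) - 2 * (k:ℝ)) * c * τ) := by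
  intro t₁ t₂ _
  have hdξ : ContDiff ℝ 1 (deriv ξ) := hξ.deriv' (n := 1)
  rw [← integral_const_mul]
  refine (integral_eq_sub_of_hasDerivAt (fun t _ ↦ ?_) ?_).symm
  · rw [hFk, two_mul_integrand_eq (by omega) (by omega) (hξ' t)]
    refine ((hasDerivAt_one_sub_rpow_mul_one_add_rpow_mul_exp
      (hξ.differentiable (by norm_num) t).hasDerivAt (hdξ.differentiable one_ne_zero t).hasDerivAt
      (hξ' t) k b c (n - 2 * k)).const_mul _).congr_of_eventuallyEq (.of_forall fun s ↦ ?_)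
    rw [hm]
    ring
  · refine Continuous.intervalIntegrable ?_ t₁ t₂
    have hpos : ∀ t, 0 < 1 - deriv ξ t ∧ 0 < 1 + deriv ξ t := fun t ↦ by
      constructor <;> linarith [abs_lt.mp (hξ' t)]
    have hA : Continuous fun τ ↦ (1 - deriv ξ τ) ^ (-(k:ℝ) * (b + c + 1)) :=
      (continuous_const.sub hdξ.continuous).rpow_const fun τ ↦ Or.inl (hpos τ).1.ne'
    have hB : Continuous fun τ ↦ (1 + deriv ξ τ) ^ (-(k:ℝ) * (b - c + 1)) :=
      (continuous_const.add hdξ.continuous).rpow_const fun τ ↦ Or.inl (hpos τ).2.ne'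
    have hξc := hξ.continuous
    have hξ''c := hdξ.continuous_deriv le_rfl
    simp only [hFk]
    fun_prop

theorem stmt_17 (n k : ℕ) (hn : 5 ≤ n) (hk : 2 ≤ k) (hkn : 2 * k < n)
    (b c : ℝ)
    (ξ : ℝ → ℝ) (hξ : ContDiff ℝ 2 ξ) (hξ' : ∀ t, |deriv ξ t| < 1)
    (Fk : ℝ → ℝ)
    (hFk : ∀ t, Fk t = (2:ℝ) ^ ((1:ℝ) - (k:ℝ)) * ((n - 1).choose (k - 1) : ℝ) *
        Real.exp (2 * (k:ℝ) * ξ t) * (1 - (deriv ξ t) ^ 2) ^ (k - 1) *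
        (deriv (deriv ξ) t + (((n:ℝ) - 2 * (k:ℝ)) / (2 * (k:ℝ))) * (1 - (deriv ξ t) ^ 2)))
    (m : ℝ → ℝ)
    (hm : ∀ t, m t = ((2:ℝ) ^ ((1:ℝ) - (k:ℝ)) / (n:ℝ)) * (n.choose k : ℝ) *
        (1 - deriv ξ t) ^ (-(k:ℝ) * (b + c)) * (1 + deriv ξ t) ^ (-(k:ℝ) * (b - c)) *
        Real.exp (((n:ℝ) - 2 * (k:ℝ)) * (b * ξ t + c * t))) :
    ∀ t₁ t₂ : ℝ, t₁ ≤ t₂ →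
      m t₂ - m t₁ =
        2 * ∫ τ in t₁..t₂, Fk τ * (1 - deriv ξ τ) ^ (-(k:ℝ) * (b + c + 1)) *
          (1 + deriv ξ τ) ^ (-(k:ℝ) * (b - c + 1)) * (b * deriv ξ τ + c) *
          Real.exp ((((n:ℝ) - 2 * (k:ℝ)) * b - 2 * (k:ℝ)) * ξ τ + ((n:ℝ) - 2 * (k:ℝ)) * c * τ) :=
  stmt_17_general n k hk hkn b c ξ hξ hξ' Fk hFk m hm
end

section
/- Let n ≥ 3 and let u : ℝⁿ \ {0} → ℝ be positive and superharmonic (i.e., Δu ≤ 0 in the classical sense, with u of class C²). Then liminf_{y → 0} u(y) > 0. -/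
/-!
Let `m > 0` be the minimum of `u` on the unit sphere and fix `0 < s < 1`. Since
`Δ ‖x‖ ^ (-a) = a (a + 2 - n) ‖x‖ ^ (-a - 2) < 0` for `0 < a < n - 2`, and `a = 1/2` is admissible
exactly when `n ≥ 3`, the function `w = u + m √(s / ‖x‖)` is strictly superharmonic on the annulus
`s ≤ ‖x‖ ≤ 1`, and `w ≥ m` on both boundary spheres. By the second derivative test a strictly
superharmonic function has no interior minimum, so `w ≥ m` on the whole annulus, that is
`u x ≥ m (1 - √(s / ‖x‖))`. Taking `s = ‖y‖ / 4` gives `u y ≥ m / 2` whenever `0 < ‖y‖ ≤ 1`.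
-/

open Filter Topology Set Metric Laplacian InnerProductSpace Module

lemma IsLocalMin.deriv_deriv_nonneg {f : ℝ → ℝ} {a : ℝ} (h : IsLocalMin f a)
    (hc : ContinuousAt f a) : 0 ≤ deriv (deriv f) a := by
  by_contra! hneg
  have hmax : IsLocalMax f a := isLocalMax_of_deriv_deriv_neg hneg h.deriv_eq_zero hc
  have hconst : f =ᶠ[𝓝 a] fun _ => f a := (h.and hmax).mono fun x hx => le_antisymm hx.2 hx.1
  have : deriv (deriv f) a = 0 := by simp [hconst.deriv.deriv_eq]
  exact hneg.ne this

lemma IsLocalMin.fderiv_fderiv_apply_self_nonneg {E : Type*} [NormedAddCommGroup E]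
    [NormedSpace ℝ E] {v : E → ℝ} {p : E} (h : IsLocalMin v p) (hv : ContDiffAt ℝ 2 v p) (e : E) :
    0 ≤ fderiv ℝ (fderiv ℝ v) p e e := by
  set c : ℝ → E := fun t => p + t • e
  have hc : ∀ t, HasDerivAt c e t := fun t => by
    simpa only [id, one_smul] using ((hasDerivAt_id t).smul_const e).const_add p
  have hc0 : c 0 = p := by simp [c]
  have hdiff : ∀ᶠ y in 𝓝 p, DifferentiableAt ℝ v y :=
    (hv.eventually (by simp)).mono fun y hy => hy.differentiableAt (by norm_num)
  have hct : Tendsto c (𝓝 0) (𝓝 p) := hc0 ▸ (hc 0).continuousAt.tendsto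
  have hderiv : deriv (v ∘ c) =ᶠ[𝓝 0] fun t => fderiv ℝ v (c t) e := by
    filter_upwards [hct.eventually hdiff] with t (ht : DifferentiableAt ℝ v (c t))
    exact ((ht.hasFDerivAt.comp_hasDerivAt t (hc t))).deriv
  have hsecond : HasDerivAt (fun t => fderiv ℝ v (c t) e) (fderiv ℝ (fderiv ℝ v) p e e) 0 := by
    have h2 : HasFDerivAt (fderiv ℝ v) (fderiv ℝ (fderiv ℝ v) p) (c 0) := by
      rw [hc0]
      exact ((hv.fderiv_right (m := 1) (by norm_num)).differentiableAt (by norm_num)).hasFDerivAt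
    have h3 := (h2.clm_apply (hasFDerivAt_const e _)).comp_hasDerivAt 0 (hc 0)
    simp only [ContinuousLinearMap.comp_zero, zero_add, ContinuousLinearMap.flip_apply] at h3
    exact h3
  have hmin : IsLocalMin (v ∘ c) 0 := by
    show ∀ᶠ t in 𝓝 0, v (c 0) ≤ v (c t)
    exact hc0 ▸ hct.eventually h
  have := hmin.deriv_deriv_nonneg
    (hdiff.self_of_nhds.continuousAt.comp_of_eq (hc 0).continuousAt hc0)
  rwa [hderiv.deriv_eq, hsecond.deriv] at this

variable {E : Type*} [NormedAddCommGroup E] [InnerProductSpace ℝ E]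

lemma IsLocalMin.laplacian_nonneg [FiniteDimensional ℝ E] {v : E → ℝ} {p : E}
    (h : IsLocalMin v p) (hv : ContDiffAt ℝ 2 v p) : 0 ≤ Δ v p := by
  rw [laplacian_eq_iteratedFDeriv_stdOrthonormalBasis]
  exact Finset.sum_nonneg fun i _ => by
    simpa [iteratedFDeriv_two_apply] using h.fderiv_fderiv_apply_self_nonneg hv _

lemma hasFDerivAt_rpow_norm_sq (q : ℝ) {x : E} (hx : x ≠ 0) :
    HasFDerivAt (fun y : E => (‖y‖ ^ 2) ^ q) ((2 * q * (‖x‖ ^ 2) ^ (q - 1)) • innerSL ℝ x) x := by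
  refine ((Real.hasDerivAt_rpow_const (p := q) (Or.inl (by positivity))).comp_hasFDerivAt x
    (hasStrictFDerivAt_norm_sq x).hasFDerivAt).congr_fderiv ?_
  ext e
  simp
  ring

lemma fderiv_fderiv_rpow_norm_sq_apply_self (q : ℝ) {x : E} (hx : x ≠ 0) (e : E) :
    fderiv ℝ (fderiv ℝ fun y : E => (‖y‖ ^ 2) ^ q) x e e =
      2 * q * (‖x‖ ^ 2) ^ (q - 1) * ‖e‖ ^ 2 +
        4 * q * (q - 1) * (‖x‖ ^ 2) ^ (q - 2) * inner ℝ x e ^ 2 := by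
  have hfd : fderiv ℝ (fun y : E => (‖y‖ ^ 2) ^ q) =ᶠ[𝓝 x]
      fun y => (2 * q * (‖y‖ ^ 2) ^ (q - 1)) • innerSL ℝ y :=
    (isOpen_ne.eventually_mem hx).mono fun y hy => (hasFDerivAt_rpow_norm_sq q hy).fderiv
  have hsecond : HasFDerivAt (fun y => (2 * q * (‖y‖ ^ 2) ^ (q - 1)) • innerSL ℝ y) _ x :=
    ((hasFDerivAt_rpow_norm_sq (q - 1) hx).const_mul (2 * q)).smul
      (innerSL ℝ : E →L[ℝ] E →L[ℝ] ℝ).hasFDerivAt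
  rw [hfd.fderiv_eq, hsecond.fderiv]
  simp only [add_apply, smul_apply, ContinuousLinearMap.smulRight_apply, innerSL_apply_apply,
    smul_eq_mul]
  rw [show innerSL ℝ e e = ‖e‖ ^ 2 from real_inner_self_eq_norm_sq e]
  ring_nf

lemma laplacian_rpow_norm_sq [FiniteDimensional ℝ E] (q : ℝ) {x : E} (hx : x ≠ 0) :
    Δ (fun y : E => (‖y‖ ^ 2) ^ q) x =
      2 * q * (finrank ℝ E + 2 * q - 2) * (‖x‖ ^ 2) ^ (q - 1) := by
  have hsum : ∑ i, inner ℝ x (stdOrthonormalBasis ℝ E i) ^ 2 = ‖x‖ ^ 2 := by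
    simpa [← sq, real_inner_comm, real_inner_self_eq_norm_sq] using
      (stdOrthonormalBasis ℝ E).sum_inner_mul_inner x x
  have hpow : (‖x‖ ^ 2) ^ (q - 2) * ‖x‖ ^ 2 = (‖x‖ ^ 2) ^ (q - 1) := by
    rw [← Real.rpow_add_one (by positivity)]; ring_nf
  simp only [laplacian_eq_iteratedFDeriv_stdOrthonormalBasis, iteratedFDeriv_two_apply,
    Matrix.cons_val_zero, Matrix.cons_val_one, fderiv_fderiv_rpow_norm_sq_apply_self q hx,
    (stdOrthonormalBasis ℝ E).orthonormal.1 _, Finset.sum_add_distrib, ← Finset.mul_sum, hsum]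
  simp
  linear_combination (4 * q * (q - 1)) * hpow

lemma laplacian_rpow_norm_sq_neg [FiniteDimensional ℝ E] {q : ℝ} (hq : q < 0)
    (hqE : 2 - finrank ℝ E < 2 * q) {x : E} (hx : x ≠ 0) :
    Δ (fun y : E => (‖y‖ ^ 2) ^ q) x < 0 := by
  rw [laplacian_rpow_norm_sq q hx]
  have : 0 < (‖x‖ ^ 2) ^ (q - 1) := by positivity
  have : 0 < (finrank ℝ E : ℝ) + 2 * q - 2 := by linarith
  nlinarith [mul_pos (mul_pos this ‹0 < (‖x‖ ^ 2) ^ (q - 1)›) (neg_pos.2 hq)]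

lemma contDiffAt_rpow_norm_sq {n : WithTop ℕ∞} (q : ℝ) {x : E} (hx : x ≠ 0) :
    ContDiffAt ℝ n (fun y : E => (‖y‖ ^ 2) ^ q) x :=
  (contDiff_norm_sq ℝ).contDiffAt.rpow_const_of_ne (by positivity)

lemma IsCompact.le_of_laplacian_neg [FiniteDimensional ℝ E] {K U : Set E} {w : E → ℝ} {a : ℝ}
    (hK : IsCompact K) (hU : IsOpen U) (hUK : U ⊆ K) (hw : ContinuousOn w K)
    (hw2 : ∀ x ∈ U, ContDiffAt ℝ 2 w x) (hΔ : ∀ x ∈ U, Δ w x < 0)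
    (hbdry : ∀ x ∈ K \ U, a ≤ w x) {x : E} (hx : x ∈ K) : a ≤ w x := by
  obtain ⟨p, hpK, hpmin⟩ := hK.exists_isMinOn ⟨x, hx⟩ hw
  refine le_trans ?_ (hpmin hx)
  by_cases hpU : p ∈ U
  · have hloc : IsLocalMin w p := hpmin.isLocalMin (mem_of_superset (hU.mem_nhds hpU) hUK)
    exact absurd (hloc.laplacian_nonneg (hw2 p hpU)) (hΔ p hpU).not_ge
  · exact hbdry p ⟨hpK, hpU⟩

lemma EuclideanSpace.laplacian_eq_sum_fderiv_fderiv_single {n : ℕ}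
    {u : EuclideanSpace ℝ (Fin n) → ℝ} {x : EuclideanSpace ℝ (Fin n)} (hu : ContDiffAt ℝ 2 u x) :
    Δ u x = ∑ i, fderiv ℝ (fun y => fderiv ℝ u y (EuclideanSpace.single i 1)) x
      (EuclideanSpace.single i 1) := by
  have hdu : DifferentiableAt ℝ (fderiv ℝ u) x :=
    (hu.fderiv_right (m := 1) (by norm_num)).differentiableAt (by norm_num)
  simp [laplacian_eq_iteratedFDeriv_orthonormalBasis u (EuclideanSpace.basisFun (Fin n) ℝ),
    iteratedFDeriv_two_apply, fderiv_clm_apply hdu (differentiableAt_const _)]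

lemma laplacian_add_smul_rpow_norm_sq_neg [FiniteDimensional ℝ E] (hE : 3 ≤ finrank ℝ E)
    {u : E → ℝ} {x : E} (hx : x ≠ 0) (hu : ContDiffAt ℝ 2 u x) (hΔu : Δ u x ≤ 0) {c : ℝ}
    (hc : 0 < c) : Δ (u + c • fun y : E => (‖y‖ ^ 2) ^ (-1/4 : ℝ)) x < 0 := by
  have hE' : (3 : ℝ) ≤ finrank ℝ E := by exact_mod_cast hE
  have hΔβ : Δ (fun y : E => (‖y‖ ^ 2) ^ (-1/4 : ℝ)) x < 0 :=
    laplacian_rpow_norm_sq_neg (by norm_num) (by linarith) hx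
  have hβ2 : ContDiffAt ℝ 2 (fun y : E => (‖y‖ ^ 2) ^ (-1/4 : ℝ)) x := contDiffAt_rpow_norm_sq _ hx
  have hcβ2 : ContDiffAt ℝ 2 (c • fun y : E => (‖y‖ ^ 2) ^ (-1/4 : ℝ)) x := hβ2.const_smul c
  rw [hu.laplacian_add hcβ2, laplacian_smul c hβ2]
  simp only [smul_eq_mul]
  nlinarith [mul_pos hc (neg_pos.2 hΔβ)]

lemma le_of_superharmonic_annulus [FiniteDimensional ℝ E] (hE : 3 ≤ finrank ℝ E) {u : E → ℝ}
    (hreg : ContDiffOn ℝ 2 u {x | x ≠ 0}) (hpos : ∀ x, x ≠ 0 → 0 < u x)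
    (hsuper : ∀ x, x ≠ 0 → Δ u x ≤ 0) {m : ℝ} (hm : 0 < m) (hmu : ∀ x, ‖x‖ = 1 → m ≤ u x)
    {s : ℝ} (hs : 0 < s) {x : E} (hsx : s ≤ ‖x‖) (hx1 : ‖x‖ ≤ 1) :
    m * (1 - √(s / ‖x‖)) ≤ u x := by
  set c := m / (s ^ 2) ^ (-1/4 : ℝ)
  set w : E → ℝ := u + c • fun y : E => (‖y‖ ^ 2) ^ (-1/4 : ℝ)
  have hsq : ∀ t : ℝ, 0 ≤ t → (t ^ 2) ^ (-1/4 : ℝ) = (√t)⁻¹ := fun t ht => by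
    rw [Real.sqrt_eq_rpow, ← Real.rpow_natCast, ← Real.rpow_mul ht, ← Real.rpow_neg ht]
    norm_num
  have hw : ∀ y : E, w y = u y + m * √(s / ‖y‖) := fun y => by
    simp only [w, c, Pi.add_apply, Pi.smul_apply, smul_eq_mul, hsq _ hs.le,
      hsq _ (norm_nonneg y), Real.sqrt_div' _ (norm_nonneg y)]
    field_simp
  have hne : ∀ y : E, s ≤ ‖y‖ → y ≠ 0 := fun y hy h => by
    rw [h, norm_zero] at hy; linarith
  have hw2 : ∀ y : E, y ≠ 0 → ContDiffAt ℝ 2 w y := fun y hy =>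
    (hreg.contDiffAt (isOpen_ne.mem_nhds hy)).add ((contDiffAt_rpow_norm_sq _ hy).const_smul c)
  have hΔw : ∀ y : E, y ≠ 0 → Δ w y < 0 := fun y hy =>
    laplacian_add_smul_rpow_norm_sq_neg hE hy (hreg.contDiffAt (isOpen_ne.mem_nhds hy))
      (hsuper y hy) (by positivity)
  have hbdry : ∀ y ∈ closedBall (0 : E) 1 \ ball 0 s, y ∉ ball 0 1 \ closedBall 0 s → m ≤ w y := by
    simp only [Set.mem_sdiff, mem_closedBall_zero_iff, mem_ball_zero_iff, not_lt, not_and_or,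
      not_le]
    rintro y ⟨hy1, hsy⟩ (hy | hy)
    · nlinarith [hw y, hmu y (le_antisymm hy1 hy), Real.sqrt_nonneg (s / ‖y‖)]
    · rw [hw, le_antisymm hy hsy, div_self hs.ne', Real.sqrt_one]
      linarith [hpos y (hne y hsy)]
  have := (isCompact_closedBall (0 : E) 1).diff isOpen_ball |>.le_of_laplacian_neg
    (isOpen_ball.sdiff isClosed_closedBall)
    (sdiff_subset_sdiff ball_subset_closedBall ball_subset_closedBall)
    (fun y hy => (hw2 y (hne y (by simpa using hy.2))).continuousAt.continuousWithinAt)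
    (fun y hy => hw2 y (hne y (by simpa using hy.2 : s < ‖y‖).le))
    (fun y hy => hΔw y (hne y (by simpa using hy.2 : s < ‖y‖).le))
    (fun y hy => hbdry y hy.1 hy.2) (x := x) (by simpa using ⟨hx1, hsx⟩)
  linarith [hw x]

lemma half_le_of_superharmonic_punctured [FiniteDimensional ℝ E] (hE : 3 ≤ finrank ℝ E)
    {u : E → ℝ} (hreg : ContDiffOn ℝ 2 u {x | x ≠ 0}) (hpos : ∀ x, x ≠ 0 → 0 < u x)
    (hsuper : ∀ x, x ≠ 0 → Δ u x ≤ 0) {m : ℝ} (hm : 0 < m) (hmu : ∀ x, ‖x‖ = 1 → m ≤ u x)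
    {y : E} (hy : y ≠ 0) (hy1 : ‖y‖ ≤ 1) : m / 2 ≤ u y := by
  have hr : 0 < ‖y‖ := norm_pos_iff.2 hy
  have hhalf : √(‖y‖ / 4 / ‖y‖) = 1 / 2 := by
    rw [div_right_comm, div_self hr.ne', Real.sqrt_eq_iff_mul_self_eq_of_pos (by norm_num)]
    norm_num
  have := le_of_superharmonic_annulus hE hreg hpos hsuper hm hmu (s := ‖y‖ / 4) (by positivity)
    (by linarith) hy1
  rw [hhalf] at this
  linarith

theorem stmt_18 (n : ℕ) (hn : 3 ≤ n)
    (u : EuclideanSpace ℝ (Fin n) → ℝ)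
    (hreg : ContDiffOn ℝ 2 u {x | x ≠ 0})
    (hpos : ∀ x : EuclideanSpace ℝ (Fin n), x ≠ 0 → 0 < u x)
    (hsuper : ∀ x : EuclideanSpace ℝ (Fin n), x ≠ 0 →
      (∑ i : Fin n, fderiv ℝ (fun y => fderiv ℝ u y (EuclideanSpace.single i 1)) x
        (EuclideanSpace.single i 1)) ≤ 0) :
    ∃ ε > 0, ∃ δ > 0, ∀ y : EuclideanSpace ℝ (Fin n), y ≠ 0 → ‖y‖ < δ → ε ≤ u y := by
  have hdim : 3 ≤ finrank ℝ (EuclideanSpace ℝ (Fin n)) := by rwa [finrank_euclideanSpace_fin]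
  have hΔ : ∀ x, x ≠ 0 → Δ u x ≤ 0 := fun x hx => by
    rw [EuclideanSpace.laplacian_eq_sum_fderiv_fderiv_single
      (hreg.contDiffAt (isOpen_ne.mem_nhds hx))]
    exact hsuper x hx
  have hsphere : sphere (0 : EuclideanSpace ℝ (Fin n)) 1 ⊆ {x | x ≠ 0} := fun x hx h => by
    simp [h] at hx
  obtain ⟨m, hm, hmu⟩ := (isCompact_sphere (0 : EuclideanSpace ℝ (Fin n)) 1).exists_forall_le'
    (hreg.continuousOn.mono hsphere) fun x hx => hpos x (hsphere hx)
  refine ⟨m / 2, half_pos hm, 1, one_pos, fun y hy hy1 => ?_⟩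
  exact half_le_of_superharmonic_punctured hdim hreg hpos hΔ hm
    (fun x hx => hmu x (by simpa using hx)) hy hy1.le
end

section
/- Let n ≥ 5, 2 ≤ k < n/2, let c = 2^{-k}·C(n,k), and let a ∈ ℝ. Define g_a(x) = 1 - e^{((n-2k)/k)(x-a)}·(1 + c^{-1}·e^{-2ka}·(e^{n(a-x)} - 1))^{1/k} for x ≤ a. Then there exist constants ξ₀ and C > 0 depending only on n and k such that whenever ξ₀ ≤ a - 1 ≤ x ≤ a, one has g_a(x) ≥ (1/C)·(a - x). -/
open Real

lemma exp_interp' (u t : ℝ) (ht0 : 0 ≤ t) (ht1 : t ≤ 1) :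
    Real.exp (t * u) ≤ 1 - t + t * Real.exp u := by
  have h := convexOn_exp.2 (Set.mem_univ (0:ℝ)) (Set.mem_univ u)
    (by linarith : (0:ℝ) ≤ 1 - t) ht0 (by ring)
  simp only [smul_eq_mul, mul_zero, zero_add, Real.exp_zero, mul_one] at h
  linarith

set_option maxHeartbeats 1000000 in
theorem stmt_19 (n k : ℕ) (hn : 5 ≤ n) (hk : 2 ≤ k) (hkn : 2 * k < n)
    (c : ℝ) (hc : c = (2:ℝ) ^ (-(k:ℝ)) * (n.choose k : ℝ))
    (g : ℝ → ℝ → ℝ)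
    (hg : ∀ a x, g a x = 1 - Real.exp (((n:ℝ) - 2 * (k:ℝ)) / (k:ℝ) * (x - a)) *
        (1 + c⁻¹ * Real.exp (-2 * (k:ℝ) * a) * (Real.exp ((n:ℝ) * (a - x)) - 1)) ^ ((1:ℝ) / (k:ℝ))) :
    ∃ ξ₀ C : ℝ, 0 < C ∧ ∀ a x : ℝ, ξ₀ ≤ a - 1 → a - 1 ≤ x → x ≤ a →
      (1 / C) * (a - x) ≤ g a x := by
  have hkn' : k ≤ n := by omega
  have hc0 : 0 < c := by
    have h1 : (0:ℝ) < (n.choose k : ℝ) := by exact_mod_cast Nat.choose_pos hkn'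
    rw [hc]
    exact mul_pos (Real.rpow_pos_of_pos two_pos _) h1
  have hk0 : (0:ℝ) < (k:ℝ) := by positivity
  set α : ℝ := ((n:ℝ) - 2 * (k:ℝ)) / (k:ℝ) with hα_def
  have hα : 0 < α := by
    apply div_pos _ hk0
    have : (2 * k : ℝ) < (n:ℝ) := by exact_mod_cast hkn
    linarith
  set D : ℝ := 1 - Real.exp (-α) with hD_def
  have hD : 0 < D := by
    have : Real.exp (-α) < 1 := Real.exp_lt_one_iff.mpr (by linarith)
    simp [hD_def]; linarith
  set En : ℝ := Real.exp n - 1 with hEn_def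
  have hEn : 0 < En := by
    have h0 : Real.exp (0:ℝ) < Real.exp (n:ℝ) := by
      apply Real.exp_lt_exp.mpr; positivity
    rw [Real.exp_zero] at h0
    simp [hEn_def]; linarith
  set L : ℝ := Real.log (2 * En / (c * D)) with hL_def
  refine ⟨|L|, 2 / D, by positivity, ?_⟩
  intro a x ha hx1 hx2
  have ha1 : 1 ≤ a := by have := abs_nonneg L; linarith
  have ht0 : 0 ≤ a - x := by linarith
  have ht1 : a - x ≤ 1 := by linarith
  set t : ℝ := a - x with ht_def
  set ε : ℝ := c⁻¹ * Real.exp (-2 * (k:ℝ) * a) with hε_def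
  have hε0 : 0 < ε := by positivity
  -- key smallness bound
  have hεle : ε * En ≤ D / 2 := by
    have hz : 0 < 2 * En / (c * D) := by positivity
    have hLa : L ≤ 2 * (k:ℝ) * a := by
      have h1 : L ≤ |L| := le_abs_self L
      have h2 : (2:ℝ) ≤ (k:ℝ) := by exact_mod_cast hk
      nlinarith
    have hexp : Real.exp (-2 * (k:ℝ) * a) ≤ Real.exp (-L) := by
      apply Real.exp_le_exp.mpr; linarith
    have hexpL : Real.exp (-L) = c * D / (2 * En) := by
      rw [hL_def, Real.exp_neg, Real.exp_log hz]
      field_simp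
    rw [hexpL] at hexp
    have := mul_le_mul_of_nonneg_left hexp (le_of_lt (inv_pos.mpr hc0))
    have h3 : c⁻¹ * (c * D / (2 * En)) = D / (2 * En) := by field_simp
    rw [h3] at this
    have h4 : ε ≤ D / (2 * En) := this
    calc ε * En ≤ D / (2 * En) * En := by nlinarith
      _ = D / 2 := by field_simp
  -- now the main estimate
  rw [hg]
  set B : ℝ := 1 + c⁻¹ * Real.exp (-2 * (k:ℝ) * a) * (Real.exp ((n:ℝ) * (a - x)) - 1) with hB_def
  have hent1 : 1 ≤ Real.exp ((n:ℝ) * (a - x)) := by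
    apply Real.one_le_exp; positivity
  have hB1 : 1 ≤ B := by
    have : 0 ≤ c⁻¹ * Real.exp (-2 * (k:ℝ) * a) * (Real.exp ((n:ℝ) * (a - x)) - 1) := by
      have := hε0; nlinarith
    rw [hB_def]; linarith
  have hpow : B ^ ((1:ℝ) / (k:ℝ)) ≤ B := by
    calc B ^ ((1:ℝ) / (k:ℝ)) ≤ B ^ (1:ℝ) := by
          apply Real.rpow_le_rpow_of_exponent_le hB1
          rw [div_le_one hk0]
          exact_mod_cast Nat.one_le_iff_ne_zero.mpr (by omega)
      _ = B := Real.rpow_one B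
  set E : ℝ := Real.exp (α * (x - a)) with hE_def
  have hE0 : 0 < E := Real.exp_pos _
  clear_value E B ε t En D L α
  have hE1 : E ≤ 1 := by
    rw [hE_def]
    apply Real.exp_le_one_iff.mpr
    nlinarith
  have hEub : E ≤ 1 - t + t * Real.exp (-α) := by
    have h := exp_interp' (-α) t ht0 ht1
    have : α * (x - a) = t * (-α) := by rw [ht_def]; ring
    rw [hE_def, this]
    exact h
  have hnt : Real.exp ((n:ℝ) * (a - x)) ≤ 1 - t + t * Real.exp n := by
    have h := exp_interp' (n:ℝ) t ht0 ht1
    have : (n:ℝ) * (a - x) = t * (n:ℝ) := by rw [ht_def]; ring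
    rw [this]; exact h
  have hmain : E * B ^ ((1:ℝ) / (k:ℝ)) ≤ E * B :=
    mul_le_mul_of_nonneg_left hpow (le_of_lt hE0)
  have hBval : B = 1 + ε * (Real.exp ((n:ℝ) * (a - x)) - 1) := by rw [hB_def, hε_def]
  have hfinal : E * B ≤ 1 - t * D / 2 := by
    have h1 : Real.exp ((n:ℝ) * (a - x)) - 1 ≤ t * En := by
      rw [hEn_def]; linarith
    have hX0 : 0 ≤ Real.exp ((n:ℝ) * (a - x)) - 1 := by linarith
    have h2 : E * (ε * (Real.exp ((n:ℝ) * (a - x)) - 1)) ≤ ε * (t * En) :=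
      calc E * (ε * (Real.exp ((n:ℝ) * (a - x)) - 1))
          ≤ 1 * (ε * (Real.exp ((n:ℝ) * (a - x)) - 1)) :=
            mul_le_mul_of_nonneg_right hE1 (mul_nonneg hε0.le hX0)
        _ = ε * (Real.exp ((n:ℝ) * (a - x)) - 1) := one_mul _
        _ ≤ ε * (t * En) := mul_le_mul_of_nonneg_left h1 hε0.le
    have h3 : E * B = E + E * (ε * (Real.exp ((n:ℝ) * (a - x)) - 1)) := by
      rw [hBval]; ring
    have h4 : ε * (t * En) ≤ t * (D / 2) := by
      have := mul_le_mul_of_nonneg_left hεle ht0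
      linarith [this, (by ring : ε * (t * En) = t * (ε * En))]
    have h5 : E ≤ 1 - t * D := by
      rw [hD_def]; linarith
    rw [h3]; linarith
  have hC : 1 / (2 / D) = D / 2 := by field_simp
  rw [hC]
  linarith
end
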